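/- arXiv:math/0203261 — 9 statements merged into one kernel-verified Lean document; each statement's English description precedes it below -/
import Mathlib

section
/- Let K be a field and let R be an affine K-algebra without zero divisors that is NOT amenable. Then there exist a finite-dimensional K-linear subspace Z ⊆ R and a real number ε > 0 such that for every nonzero finite-dimensional K-linear subspace V ⊆ R one has dim_K(V·Z + V) > (1 + ε)·dim_K(V), where V·Z denotes the K-linear span of all products vz with v ∈ V, z ∈ Z. -/
/-!
Fix a finite-dimensional generating subspace `S ∋ 1`, so that the powers `S ^ n` exhaust `R`.
If the conclusion fails, then for every `ε > 0` and `N` some nonzero `V` is `ε`-Følner for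
`S ^ (2N)`, and `V * S ^ N` is then `ε`-Følner for `S ^ N`. Its dimension is at least `N`:
the chain `V ⊆ V S ⊆ V S² ⊆ ⋯` must grow strictly, since a stable term would be a nonzero
finite-dimensional right ideal, into which left multiplication by a nonzero element (injective,
as `R` has no zero divisors) would embed the infinite-dimensional `R`. Adjoining to each stage
of an exhaustion a Følner set so large that the stage is negligible against it yields a Følner
exhaustion, contradicting non-amenability.
-/

open Filter Module

/-- `W·r`: the image of the finite dimensional subspace `W` under right multiplication
by `r`. -/
noncomputable def rightMulSubmodule (K : Type*) [Field K] {R : Type*} [Ring R] [Algebra K R]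
    (W : Submodule K R) (r : R) : Submodule K R :=
  W.map (LinearMap.mulRight K r)

/-- A Følner exhaustion of a `K`-algebra `R`: an increasing sequence of finite dimensional
subspaces exhausting `R` such that for every `r ∈ R`,
`dim (Wₙ·r + Wₙ) / dim Wₙ → 1`. -/
def FolnerExhaustion (K : Type*) [Field K] (R : Type*) [Ring R] [Algebra K R]
    (W : ℕ → Submodule K R) : Prop :=
  Monotone W ∧ (∀ n, FiniteDimensional K (W n)) ∧ (∀ x : R, ∃ n, x ∈ W n) ∧
    ∀ r : R,
      Tendsto (fun n => (finrank K ↥(rightMulSubmodule K (W n) r ⊔ W n) : ℝ) / finrank K (W n))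
        atTop (nhds 1)

/-- An affine algebra is (left) amenable if it admits a Følner exhaustion. -/
def AmenableAlgebra (K : Type*) [Field K] (R : Type*) [Ring R] [Algebra K R] : Prop :=
  ∃ W : ℕ → Submodule K R, FolnerExhaustion K R W

open scoped Topology

namespace Submodule

variable {R A : Type*} [CommSemiring R] [Semiring A] [Algebra R A]

instance finite_mul (M N : Submodule R A) [Module.Finite R M] [Module.Finite R N] :
    Module.Finite R ↥(M * N) :=
  Module.Finite.iff_fg.2 ((Module.Finite.iff_fg.1 ‹_›).mul (Module.Finite.iff_fg.1 ‹_›))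

instance finite_pow (M : Submodule R A) [Module.Finite R M] (n : ℕ) :
    Module.Finite R ↥(M ^ n) :=
  Module.Finite.iff_fg.2 ((Module.Finite.iff_fg.1 ‹_›).pow n)

end Submodule

section Expansion

variable {K R : Type*} [Field K] [Ring R] [Algebra K R]

instance finiteDimensional_rightMulSubmodule (W : Submodule K R) [FiniteDimensional K W] (r : R) :
    FiniteDimensional K (rightMulSubmodule K W r) :=
  Module.Finite.map W (LinearMap.mulRight K r)

def IsFolner (ε : ℝ) (Z W : Submodule K R) : Prop :=
  (finrank K ↥(W * Z ⊔ W) : ℝ) ≤ (1 + ε) * finrank K W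

variable (K R) in
theorem exists_finiteDimensional_one_le_forall_mem_pow [Algebra.FiniteType K R] :
    ∃ S : Submodule K R, FiniteDimensional K S ∧ 1 ≤ S ∧ ∀ x : R, ∃ n, x ∈ S ^ n := by
  obtain ⟨s, hs⟩ := Algebra.FiniteType.out (R := K) (A := R)
  set S := Submodule.span K (insert 1 (s : Set R))
  have hS1 : 1 ≤ S := Submodule.one_le.2 (Submodule.subset_span (Set.mem_insert _ _))
  refine ⟨S, FiniteDimensional.span_of_finite K (s.finite_toSet.insert 1), hS1, fun x => ?_⟩
  have hx : x ∈ Algebra.adjoin K (s : Set R) := hs ▸ Algebra.mem_top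
  induction hx using Algebra.adjoin_induction with
  | mem x hx =>
    exact ⟨1, by rw [pow_one]; exact Submodule.subset_span (Set.mem_insert_of_mem _ hx)⟩
  | algebraMap c => exact ⟨0, by rw [pow_zero]; exact Submodule.algebraMap_mem c⟩
  | add x y _ _ hx hy =>
    obtain ⟨m, hm⟩ := hx
    obtain ⟨n, hn⟩ := hy
    exact ⟨max m n, add_mem (pow_le_pow_right' hS1 (le_max_left m n) hm)
      (pow_le_pow_right' hS1 (le_max_right m n) hn)⟩
  | mul x y _ _ hx hy =>
    obtain ⟨m, hm⟩ := hx
    obtain ⟨n, hn⟩ := hy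
    exact ⟨m + n, pow_add S m n ▸ Submodule.mul_mem_mul hm hn⟩

theorem amenableAlgebra_of_finiteDimensional [Nontrivial R] [FiniteDimensional K R] :
    AmenableAlgebra K R := by
  refine ⟨fun _ => ⊤, monotone_const, fun _ => inferInstance, fun _ => ⟨0, trivial⟩,
    fun r => ?_⟩
  have h : (finrank K ↥(rightMulSubmodule K ⊤ r ⊔ ⊤) : ℝ) / finrank K ↥(⊤ : Submodule K R)
      = 1 := by
    rw [sup_top_eq, finrank_top, div_self (by exact_mod_cast finrank_pos.ne')]
  simpa only [h] using tendsto_const_nhds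

theorem Submodule.eq_bot_of_mul_le_self [NoZeroDivisors R] (hR : ¬FiniteDimensional K R)
    {S : Submodule K R} (hS : ∀ x : R, ∃ n, x ∈ S ^ n) {U : Submodule K R}
    [FiniteDimensional K U] (hU : U * S ≤ U) : U = ⊥ := by
  have hUpow : ∀ n, U * S ^ n ≤ U := by
    intro n
    induction n with
    | zero => rw [pow_zero, mul_one]
    | succ n ih => rw [pow_succ, ← mul_assoc]; exact (mul_le_mul' ih le_rfl).trans hU
  by_contra hne
  obtain ⟨v, hv, hv0⟩ := exists_mem_ne_zero_of_ne_bot hne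
  have hvR : ∀ x, LinearMap.mulLeft K v x ∈ U := fun x =>
    let ⟨n, hn⟩ := hS x
    hUpow n (mul_mem_mul hv hn)
  exact hR (FiniteDimensional.of_injective ((LinearMap.mulLeft K v).codRestrict U hvR)
    fun x y hxy => mul_left_cancel₀ hv0 (congrArg Subtype.val hxy))

theorem le_finrank_mul_pow [NoZeroDivisors R] (hR : ¬FiniteDimensional K R)
    {S : Submodule K R} [FiniteDimensional K S] (hS1 : 1 ≤ S) (hS : ∀ x : R, ∃ n, x ∈ S ^ n)
    {V : Submodule K R} [FiniteDimensional K V] (hV : V ≠ ⊥) (j : ℕ) :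
    j ≤ finrank K ↥(V * S ^ j) := by
  induction j with
  | zero => exact Nat.zero_le _
  | succ j ih =>
    have hlt : V * S ^ j < V * S ^ (j + 1) := by
      refine lt_of_le_of_ne (mul_le_mul' le_rfl (pow_le_pow_right' hS1 j.le_succ)) fun heq => ?_
      have hstable : V * S ^ j * S ≤ V * S ^ j := by rw [mul_assoc, ← pow_succ, heq]
      refine hV (le_bot_iff.1 ?_)
      calc V ≤ V * S ^ j := le_mul_of_one_le_right' (one_le_pow_of_one_le' hS1 j)
        _ = ⊥ := Submodule.eq_bot_of_mul_le_self hR hS hstable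
    exact ih.trans_lt (Submodule.finrank_lt_finrank_of_lt hlt)

theorem IsFolner.mul_pow {ε : ℝ} (hε : 0 ≤ ε) {S V : Submodule K R} [FiniteDimensional K S]
    [FiniteDimensional K V] (hS1 : 1 ≤ S) {N : ℕ} (hV : IsFolner ε (S ^ (N + N)) V) :
    IsFolner ε (S ^ N) (V * S ^ N) := by
  have hV_le : ∀ n, V ≤ V * S ^ n := fun n =>
    le_mul_of_one_le_right' (one_le_pow_of_one_le' hS1 n)
  unfold IsFolner at hV ⊢
  rw [sup_eq_left.2 (hV_le _)] at hV
  rw [mul_assoc, ← pow_add,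
    sup_eq_left.2 (mul_le_mul' le_rfl (pow_le_pow_right' hS1 (N.le_add_right N)))]
  calc _ ≤ (1 + ε) * finrank K V := hV
    _ ≤ _ := mul_le_mul_of_nonneg_left
      (by exact_mod_cast Submodule.finrank_mono (hV_le N)) (by linarith)

theorem finrank_rightMulSubmodule_sup_le {P G T : Submodule K R} [FiniteDimensional K P]
    [FiniteDimensional K G] [FiniteDimensional K T] {r : R} (hr : r ∈ T) {ε : ℝ} (hε : 0 ≤ ε)
    (hG : IsFolner ε T G) (hP : (finrank K P : ℝ) ≤ ε * finrank K G) :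
    (finrank K ↥(rightMulSubmodule K (P ⊔ G) r ⊔ (P ⊔ G)) : ℝ) ≤
      (1 + 3 * ε) * finrank K ↥(P ⊔ G) := by
  have hGr : rightMulSubmodule K G r ≤ G * T := by
    rintro _ ⟨g, hg, rfl⟩
    exact Submodule.mul_mem_mul hg hr
  have hle : rightMulSubmodule K (P ⊔ G) r ⊔ (P ⊔ G) ≤
      (G * T ⊔ G) ⊔ (rightMulSubmodule K P r ⊔ P) := by
    rw [rightMulSubmodule, Submodule.map_sup]
    exact sup_le
      (sup_le (le_sup_of_le_right le_sup_left) (le_sup_of_le_left (le_sup_of_le_left hGr)))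
      (sup_le (le_sup_of_le_right le_sup_right) (le_sup_of_le_left le_sup_right))
  have hnat : finrank K ↥(rightMulSubmodule K (P ⊔ G) r ⊔ (P ⊔ G)) ≤
      finrank K ↥(G * T ⊔ G) + (finrank K P + finrank K P) :=
    calc _ ≤ finrank K ↥((G * T ⊔ G) ⊔ (rightMulSubmodule K P r ⊔ P)) :=
          Submodule.finrank_mono hle
      _ ≤ finrank K ↥(G * T ⊔ G) + finrank K ↥(rightMulSubmodule K P r ⊔ P) :=
          Submodule.finrank_add_le_finrank_add_finrank _ _
      _ ≤ _ := Nat.add_le_add_left ((Submodule.finrank_add_le_finrank_add_finrank _ _).trans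
          (Nat.add_le_add_right (Submodule.finrank_map_le _ _) _)) _
  have hGW : (finrank K G : ℝ) ≤ finrank K ↥(P ⊔ G) := by
    exact_mod_cast Submodule.finrank_mono le_sup_right
  unfold IsFolner at hG
  calc (_ : ℝ) ≤ finrank K ↥(G * T ⊔ G) + 2 * finrank K P := by
        have : (_ : ℝ) ≤ _ := Nat.cast_le.2 hnat
        push_cast at this
        linarith
    _ ≤ (1 + ε) * finrank K G + 2 * (ε * finrank K G) := by linarith
    _ = (1 + 3 * ε) * finrank K G := by ring
    _ ≤ _ := mul_le_mul_of_nonneg_left hGW (by linarith)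

theorem FolnerExhaustion.of_eventually_le {W : ℕ → Submodule K R} (hmono : Monotone W)
    (hfd : ∀ n, FiniteDimensional K (W n)) (hexh : ∀ x : R, ∃ n, x ∈ W n) {δ : ℕ → ℝ}
    (hδ : Tendsto δ atTop (𝓝 0))
    (h : ∀ r : R, ∀ᶠ n in atTop, 0 < finrank K (W n) ∧
      (finrank K ↥(rightMulSubmodule K (W n) r ⊔ W n) : ℝ) ≤ (1 + δ n) * finrank K (W n)) :
    FolnerExhaustion K R W := by
  refine ⟨hmono, hfd, hexh, fun r => ?_⟩
  have hupper : Tendsto (fun n => 1 + δ n) atTop (𝓝 1) := by simpa using hδ.const_add 1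
  refine tendsto_of_tendsto_of_tendsto_of_le_of_le' tendsto_const_nhds hupper ?_ ?_
  · filter_upwards [h r] with n hn
    have := hfd n
    rw [one_le_div (by exact_mod_cast hn.1)]
    exact_mod_cast Submodule.finrank_mono le_sup_right
  · filter_upwards [h r] with n hn
    rw [div_le_iff₀ (by exact_mod_cast hn.1)]
    exact hn.2

section FolnerSeq

variable (S : Submodule K R) (G : ℕ → ℕ → Submodule K R)

/-- `N` is chosen so that a set `G n N` of dimension at least `N` dwarfs
`folnerSeq n ⊔ S ^ n`. -/
noncomputable def folnerSeq : ℕ → Submodule K R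
  | 0 => ⊥
  | n + 1 => folnerSeq n ⊔ S ^ n ⊔ G n ((n + 1) * (finrank K ↥(folnerSeq n ⊔ S ^ n) + 1))

theorem monotone_folnerSeq : Monotone (folnerSeq S G) :=
  monotone_nat_of_le_succ fun _ => le_sup_of_le_left le_sup_left

theorem pow_le_folnerSeq_succ (n : ℕ) : S ^ n ≤ folnerSeq S G (n + 1) :=
  le_sup_of_le_left le_sup_right

variable {S G} [FiniteDimensional K S] [∀ n N, FiniteDimensional K (G n N)]

instance finiteDimensional_folnerSeq (n : ℕ) : FiniteDimensional K (folnerSeq S G n) := by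
  induction n with
  | zero => exact inferInstanceAs (FiniteDimensional K (⊥ : Submodule K R))
  | succ n ih => rw [folnerSeq]; infer_instance

theorem finrank_folnerSeq_succ_pos (hGrank : ∀ n N, N ≤ finrank K (G n N)) (n : ℕ) :
    0 < finrank K (folnerSeq S G (n + 1)) :=
  calc 0 < n + 1 := n.succ_pos
    _ ≤ (n + 1) * (finrank K ↥(folnerSeq S G n ⊔ S ^ n) + 1) :=
      Nat.le_mul_of_pos_right _ (by omega)
    _ ≤ finrank K (G n _) := hGrank n _
    _ ≤ _ := Submodule.finrank_mono le_sup_right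

theorem finrank_rightMulSubmodule_folnerSeq_succ_le (hS1 : 1 ≤ S)
    (hGrank : ∀ n N, N ≤ finrank K (G n N))
    (hG : ∀ n N : ℕ, IsFolner (1 / ((n : ℝ) + 1)) (S ^ N) (G n N)) {n : ℕ} {r : R}
    (hr : r ∈ S ^ (n + 1)) :
    (finrank K ↥(rightMulSubmodule K (folnerSeq S G (n + 1)) r ⊔ folnerSeq S G (n + 1)) : ℝ) ≤
      (1 + 3 / (n + 1 : ℕ)) * finrank K (folnerSeq S G (n + 1)) := by
  set P := folnerSeq S G n ⊔ S ^ n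
  set N := (n + 1) * (finrank K P + 1)
  have hP : (finrank K P : ℝ) ≤ 1 / (n + 1) * finrank K (G n N) := by
    rw [div_mul_eq_mul_div, one_mul, le_div_iff₀ (by positivity)]
    have : finrank K P * (n + 1) ≤ N := by
      rw [Nat.mul_comm]; exact Nat.mul_le_mul_left _ (by omega)
    exact_mod_cast this.trans (hGrank n N)
  have hrN : r ∈ S ^ N := pow_le_pow_right' hS1 (Nat.le_mul_of_pos_right _ (by omega)) hr
  rw [show folnerSeq S G (n + 1) = P ⊔ G n N from rfl]
  convert finrank_rightMulSubmodule_sup_le hrN (by positivity) (hG n N) hP using 3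
  push_cast
  ring

end FolnerSeq

theorem amenableAlgebra_of_exists_isFolner {S : Submodule K R} [FiniteDimensional K S]
    (hS1 : 1 ≤ S) (hS : ∀ x : R, ∃ n, x ∈ S ^ n)
    (hF : ∀ ε : ℝ, 0 < ε → ∀ N : ℕ, ∃ W : Submodule K R,
      FiniteDimensional K W ∧ N ≤ finrank K W ∧ IsFolner ε (S ^ N) W) :
    AmenableAlgebra K R := by
  choose G hGfd hGrank hG using fun n : ℕ => hF (1 / (n + 1)) Nat.one_div_pos_of_nat
  refine ⟨folnerSeq S G, FolnerExhaustion.of_eventually_le (monotone_folnerSeq S G)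
    finiteDimensional_folnerSeq (fun x => ?_) (tendsto_const_div_atTop_nhds_zero_nat 3)
    fun r => ?_⟩
  · obtain ⟨n, hn⟩ := hS x
    exact ⟨n + 1, pow_le_folnerSeq_succ S G n hn⟩
  · obtain ⟨m, hm⟩ := hS r
    filter_upwards [eventually_ge_atTop (m + 1)] with k hk
    obtain ⟨n, rfl⟩ : ∃ n, k = n + 1 := ⟨k - 1, by omega⟩
    exact ⟨finrank_folnerSeq_succ_pos hGrank n, finrank_rightMulSubmodule_folnerSeq_succ_le hS1
      hGrank hG (pow_le_pow_right' hS1 (by omega) hm)⟩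

end Expansion

/-- If an affine algebra without zero divisors is not amenable, then there is a finite
dimensional subspace `Z` and `ε > 0` such that `dim (V·Z + V) > (1+ε)·dim V` for every nonzero
finite dimensional subspace `V`. -/
theorem nonamenable_expansion (K : Type*) [Field K] (R : Type*) [Ring R] [Algebra K R]
    [Algebra.FiniteType K R] [NoZeroDivisors R]
    (hR : ¬ AmenableAlgebra K R) :
    ∃ (Z : Submodule K R) (ε : ℝ), FiniteDimensional K Z ∧ 0 < ε ∧
      ∀ V : Submodule K R, FiniteDimensional K V → V ≠ ⊥ →
        (1 + ε) * finrank K V < (finrank K ↥(V * Z ⊔ V) : ℝ) := by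
  rcases subsingleton_or_nontrivial R with _ | _
  · exact ⟨⊥, 1, inferInstance, one_pos, fun V _ hV => (hV (Subsingleton.elim V ⊥)).elim⟩
  have hfin : ¬FiniteDimensional K R := fun _ => hR amenableAlgebra_of_finiteDimensional
  obtain ⟨S, _, hS1, hS⟩ := exists_finiteDimensional_one_le_forall_mem_pow K R
  by_contra! hcon
  refine hR (amenableAlgebra_of_exists_isFolner hS1 hS fun ε hε N => ?_)
  obtain ⟨V, _, hV, hVF⟩ := hcon (S ^ (N + N)) ε inferInstance hε
  exact ⟨V * S ^ N, inferInstance, le_finrank_mul_pow hfin hS1 hS hV N,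
    IsFolner.mul_pow hε.le hS1 hVF⟩
end

section
/- (Doubling Lemma) Let K be a field and let R be an affine K-algebra without zero divisors that is NOT amenable. Then there exists a finite-dimensional K-linear subspace Z ⊆ R such that for every nonzero finite-dimensional K-linear subspace V ⊆ R one has dim_K(V·Z) > 2·dim_K(V), where V·Z denotes the K-linear span of all products vz with v ∈ V, z ∈ Z. -/
open Filter Module

section Aux
variable {K : Type*} [Field K] {R : Type*} [Ring R] [Algebra K R]

lemma aux_le_mul {V Z : Submodule K R} (h1 : (1:R) ∈ Z) : V ≤ V * Z := fun v hv =>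
  mul_one v ▸ Submodule.mul_mem_mul hv h1

lemma aux_one_mem_pow {S : Submodule K R} (hS1 : (1:R) ∈ S) : ∀ n, (1:R) ∈ S ^ n := by
  intro n
  induction n with
  | zero => rw [pow_zero]; exact Submodule.one_le.mp le_rfl
  | succ n ih => rw [pow_succ]; exact mul_one (1:R) ▸ Submodule.mul_mem_mul ih hS1

lemma aux_pow_mono {S : Submodule K R} (hS1 : (1:R) ∈ S) : Monotone (fun n => S ^ n) := by
  apply monotone_nat_of_le_succ
  intro n x hx
  rw [pow_succ]
  exact mul_one x ▸ Submodule.mul_mem_mul hx hS1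

lemma aux_finrank_sup_le (p q : Submodule K R) [FiniteDimensional K p]
    [FiniteDimensional K q] : finrank K ↥(p ⊔ q) ≤ finrank K p + finrank K q := by
  have := Submodule.finrank_sup_add_finrank_inf_eq p q
  omega

lemma aux_finrank_le_mul_left [NoZeroDivisors R] {V Z : Submodule K R} (hV : V ≠ ⊥)
    (hVfg : V.FG) (hZfg : Z.FG) : finrank K Z ≤ finrank K ↥(V * Z) := by
  haveI : FiniteDimensional K ↥(V * Z) := Module.Finite.iff_fg.mpr (hVfg.mul hZfg)
  obtain ⟨v, hvV, hv0⟩ := Submodule.ne_bot_iff V |>.mp hV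
  have hinj : Function.Injective (LinearMap.mulLeft K v) := by
    intro a b h
    simp only [LinearMap.mulLeft_apply] at h
    exact mul_right_injective₀ hv0 h
  calc finrank K Z = finrank K ↥(Z.map (LinearMap.mulLeft K v)) :=
        (Submodule.equivMapOfInjective _ hinj Z).finrank_eq
    _ ≤ finrank K ↥(V * Z) := by
        apply Submodule.finrank_mono
        rintro _ ⟨z, hz, rfl⟩
        exact Submodule.mul_mem_mul hvV hz

lemma aux_frk_congr {p q : Submodule K R} (h : p = q) :
    finrank K ↥p = finrank K ↥q := by rw [h]

lemma aux_pigeon (c : ℝ) (hc : 1 < c) (d : ℕ → ℕ) (N : ℕ) (hN : (d N : ℝ) ≤ 2 * d 0)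
    (h0 : 0 < d 0) (h2 : 2 < c ^ N) : ∃ k < N, (d (k+1) : ℝ) ≤ c * d k := by
  by_contra h
  push_neg at h
  have key : ∀ k ≤ N, c ^ k * d 0 ≤ (d k : ℝ) := by
    intro k hk
    induction k with
    | zero => simp
    | succ k ih =>
      have hkN : k < N := hk
      have h1 := h k hkN
      have ihh := ih hkN.le
      have hmul := mul_le_mul_of_nonneg_left ihh (by linarith : (0:ℝ) ≤ c)
      calc c ^ (k+1) * d 0 = c * (c ^ k * d 0) := by ring
        _ ≤ c * d k := hmul
        _ ≤ (d (k+1) : ℝ) := h1.le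
  have hkey := key N le_rfl
  have h1d : (1 : ℝ) ≤ d 0 := by exact_mod_cast h0
  nlinarith

lemma aux_exhaust (s : Set R) (hs : Algebra.adjoin K s = ⊤) (x : R) :
    ∃ n, x ∈ (Submodule.span K (insert (1:R) s)) ^ n := by
  set S := Submodule.span K (insert (1:R) s) with hSdef
  have hS1 : (1:R) ∈ S := Submodule.subset_span (Set.mem_insert _ _)
  have hx : x ∈ Algebra.adjoin K s := hs ▸ Algebra.mem_top
  induction hx using Algebra.adjoin_induction with
  | mem y hy => exact ⟨1, by rw [pow_one]; exact Submodule.subset_span (Set.mem_insert_of_mem _ hy)⟩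
  | algebraMap r =>
    refine ⟨0, ?_⟩
    rw [pow_zero, Submodule.one_eq_span, Algebra.algebraMap_eq_smul_one]
    exact Submodule.smul_mem _ r (Submodule.mem_span_singleton_self 1)
  | add y z hy hz ihy ihz =>
    obtain ⟨n, hn⟩ := ihy
    obtain ⟨m, hm⟩ := ihz
    exact ⟨max n m, add_mem (aux_pow_mono hS1 (le_max_left n m) hn)
      (aux_pow_mono hS1 (le_max_right n m) hm)⟩
  | mul y z hy hz ihy ihz =>
    obtain ⟨n, hn⟩ := ihy
    obtain ⟨m, hm⟩ := ihz
    exact ⟨n + m, by rw [pow_add]; exact Submodule.mul_mem_mul hn hm⟩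


lemma aux_unbounded {S : Submodule K R} (hS1 : (1:R) ∈ S) (hfg : S.FG)
    (hexh : ∀ x : R, ∃ n, x ∈ S ^ n) (hinf : ¬ Module.Finite K R) :
    ∀ D : ℕ, ∃ j, D < finrank K ↥(S ^ j) := by
  intro D
  by_contra h
  push_neg at h
  classical
  set P : ℕ → Prop := fun n => ∃ j, n ≤ finrank K ↥(S ^ j) with hP
  have hP0 : P 0 := ⟨0, Nat.zero_le _⟩
  have hPm : P (Nat.findGreatest P D) := Nat.findGreatest_spec (Nat.zero_le D) hP0
  obtain ⟨j, hj⟩ := hPm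
  have hmax : ∀ i, finrank K ↥(S ^ i) ≤ finrank K ↥(S ^ j) := by
    intro i
    have h1 : finrank K ↥(S ^ i) ≤ Nat.findGreatest P D :=
      Nat.le_findGreatest (h i) ⟨i, le_rfl⟩
    omega
  have hle : ∀ i, S ^ i ≤ S ^ j := by
    intro i
    haveI : FiniteDimensional K ↥(S ^ (max i j)) :=
      Module.Finite.iff_fg.mpr (hfg.pow _)
    have heq : S ^ j = S ^ (max i j) :=
      Submodule.eq_of_le_of_finrank_le (aux_pow_mono hS1 (le_max_right i j)) (hmax _)
    exact heq ▸ aux_pow_mono hS1 (le_max_left i j)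
  have htop : (⊤ : Submodule K R) = S ^ j := by
    refine le_antisymm (fun x _ => ?_) le_top
    obtain ⟨n, hn⟩ := hexh x
    exact hle n hn
  exact hinf (Module.finite_def.mpr (htop ▸ hfg.pow j))

variable [NoZeroDivisors R]

lemma aux_claimC
    (hcon : ∀ Z : Submodule K R, FiniteDimensional K Z →
      ∃ V : Submodule K R, FiniteDimensional K V ∧ V ≠ ⊥ ∧
        (finrank K ↥(V * Z) : ℝ) ≤ 2 * finrank K V)
    {S : Submodule K R} (hS1 : (1:R) ∈ S) (hfg : S.FG)
    (hUnb : ∀ D : ℕ, ∃ j, D < finrank K ↥(S ^ j))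
    (m : ℕ) (hm : 0 < m) (c : ℝ) (hc : 1 < c) (D : ℕ) :
    ∃ V : Submodule K R, V.FG ∧ V ≠ ⊥ ∧ D ≤ finrank K ↥V ∧
      (finrank K ↥(V * S ^ m) : ℝ) ≤ c * finrank K ↥V := by
  obtain ⟨N₀, hN₀⟩ := pow_unbounded_of_one_lt (2:ℝ) hc
  obtain ⟨j, hj⟩ := hUnb (2 * D)
  set N := max N₀ j with hNdef
  have hcN : 2 < c ^ N := lt_of_lt_of_le hN₀ (pow_le_pow_right₀ hc.le (le_max_left _ _))
  have hjmN : j ≤ m * N := le_trans (le_max_right N₀ j) (Nat.le_mul_of_pos_left N hm)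
  haveI : FiniteDimensional K ↥(S ^ (m * N)) := Module.Finite.iff_fg.mpr (hfg.pow _)
  have hjN : 2 * D < finrank K ↥(S ^ (m * N)) :=
    lt_of_lt_of_le hj (Submodule.finrank_mono (aux_pow_mono hS1 hjmN))
  obtain ⟨V₀, hV₀fin, hV₀ne, hV₀le⟩ := hcon (S ^ (m * N)) inferInstance
  have hV₀fg : V₀.FG := Module.Finite.iff_fg.mp hV₀fin
  have hTfg : ∀ k : ℕ, ((S ^ m) ^ k).FG := fun k => (hfg.pow m).pow k
  have hfgVT : ∀ k : ℕ, (V₀ * (S ^ m) ^ k).FG := fun k => hV₀fg.mul (hTfg k)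
  haveI : ∀ k : ℕ, FiniteDimensional K ↥(V₀ * (S ^ m) ^ k) :=
    fun k => Module.Finite.iff_fg.mpr (hfgVT k)
  set d : ℕ → ℕ := fun k => finrank K ↥(V₀ * (S ^ m) ^ k) with hd
  have hd0 : d 0 = finrank K V₀ := by
    rw [hd]
    exact aux_frk_congr (by rw [pow_zero, mul_one])
  have hdN : (d N : ℝ) ≤ 2 * d 0 := by
    rw [hd0]
    have he : d N = finrank K ↥(V₀ * S ^ (m * N)) := by
      rw [hd]
      exact aux_frk_congr (by rw [← pow_mul])
    rw [he]
    exact hV₀le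
  have h0 : 0 < d 0 := by
    rw [hd0]
    haveI : Nontrivial V₀ := Submodule.nontrivial_iff_ne_bot.mpr hV₀ne
    haveI := hV₀fin
    exact Module.finrank_pos
  obtain ⟨k, hkN, hk⟩ := aux_pigeon c hc d N hdN h0 hcN
  have h1Tk : (1:R) ∈ (S ^ m) ^ k := aux_one_mem_pow (aux_one_mem_pow hS1 m) k
  refine ⟨V₀ * (S ^ m) ^ k, hfgVT k, ?_, ?_, ?_⟩
  · intro h
    exact hV₀ne (le_bot_iff.mp (h ▸ aux_le_mul h1Tk))
  · have hled : d 0 ≤ d k := by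
      rw [hd0]
      exact Submodule.finrank_mono (aux_le_mul h1Tk)
    have hDN : 2 * D < d N := by
      have he : (S ^ m) ^ N = S ^ (m * N) := by rw [← pow_mul]
      calc 2 * D < finrank K ↥(S ^ (m * N)) := hjN
        _ = finrank K ↥((S ^ m) ^ N) := aux_frk_congr he.symm
        _ ≤ finrank K ↥(V₀ * (S ^ m) ^ N) :=
            aux_finrank_le_mul_left hV₀ne hV₀fg (hTfg N)
    have hfin : (D : ℝ) < d k := by
      have h1 : ((2 * D : ℕ) : ℝ) < (d N : ℝ) := by exact_mod_cast hDN
      have h2 : ((d 0 : ℕ) : ℝ) ≤ (d k : ℝ) := by exact_mod_cast hled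
      push_cast at h1
      linarith
    have : (D : ℕ) < d k := by exact_mod_cast hfin
    exact this.le
  · have he : V₀ * (S ^ m) ^ k * S ^ m = V₀ * (S ^ m) ^ (k + 1) := by
      rw [pow_succ, mul_assoc]
    rw [aux_frk_congr he]
    exact hk

lemma aux_lemmaA
    (hcon : ∀ Z : Submodule K R, FiniteDimensional K Z →
      ∃ V : Submodule K R, FiniteDimensional K V ∧ V ≠ ⊥ ∧
        (finrank K ↥(V * Z) : ℝ) ≤ 2 * finrank K V)
    {S : Submodule K R} (hS1 : (1:R) ∈ S) (hfg : S.FG)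
    (hUnb : ∀ D : ℕ, ∃ j, D < finrank K ↥(S ^ j))
    (n : ℕ) (F : Submodule K R) (hF : F.FG) :
    ∃ W : Submodule K R, W.FG ∧ F ≤ W ∧ W ≠ ⊥ ∧
      (finrank K ↥(W * S ^ (n+1)) : ℝ) ≤ (1 + 2/((n:ℝ)+1)) * finrank K ↥W := by
  set t : ℝ := (n:ℝ) + 1 with htdef
  have ht : 0 < t := by positivity
  have hc : 1 < 1 + 1/t := by
    have : 0 < 1/t := by positivity
    linarith
  obtain ⟨V, hVfg, hVne, hVD, hVbd⟩ := aux_claimC hcon hS1 hfg hUnb (n+1) n.succ_pos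
    (1 + 1/t) hc ((n+1) * finrank K ↥(F * S ^ (n+1)))
  haveI : FiniteDimensional K ↥(V * S ^ (n+1)) :=
    Module.Finite.iff_fg.mpr (hVfg.mul (hfg.pow _))
  haveI : FiniteDimensional K ↥(F * S ^ (n+1)) :=
    Module.Finite.iff_fg.mpr (hF.mul (hfg.pow _))
  haveI : FiniteDimensional K ↥V := Module.Finite.iff_fg.mpr hVfg
  haveI : FiniteDimensional K ↥F := Module.Finite.iff_fg.mpr hF
  haveI : FiniteDimensional K ↥(V ⊔ F) := Module.Finite.iff_fg.mpr (hVfg.sup hF)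
  refine ⟨V ⊔ F, hVfg.sup hF, le_sup_right, ?_, ?_⟩
  · intro h
    exact hVne (le_bot_iff.mp (h ▸ le_sup_left))
  · have hsup : (V ⊔ F) * S ^ (n+1) = V * S ^ (n+1) ⊔ F * S ^ (n+1) :=
      Submodule.sup_mul _ _ _
    have h1 : finrank K ↥((V ⊔ F) * S ^ (n+1)) ≤
        finrank K ↥(V * S ^ (n+1)) + finrank K ↥(F * S ^ (n+1)) := by
      rw [hsup]
      exact aux_finrank_sup_le _ _
    have h3 : (finrank K ↥V : ℝ) ≤ (finrank K ↥(V ⊔ F) : ℝ) := by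
      exact_mod_cast Submodule.finrank_mono (le_sup_left : V ≤ V ⊔ F)
    set v : ℝ := (finrank K ↥V : ℝ) with hv
    set w : ℝ := (finrank K ↥(V ⊔ F) : ℝ) with hw
    have h2 : (finrank K ↥(F * S ^ (n+1)) : ℝ) ≤ v / t := by
      rw [le_div_iff₀ ht]
      have hn : ((n+1) * finrank K ↥(F * S ^ (n+1)) : ℕ) ≤ finrank K ↥V := hVD
      have hcast : ((n:ℝ)+1) * (finrank K ↥(F * S ^ (n+1)) : ℝ) ≤ v := by
        rw [hv]
        exact_mod_cast hn
      rw [htdef]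
      linarith
    have e : (1 + 1/t) * v + v/t = (1 + 2/t) * v := by
      field_simp
      ring
    have hvpos : 0 ≤ v := by positivity
    have h2t : 0 ≤ 2/t := by positivity
    calc (finrank K ↥((V ⊔ F) * S ^ (n+1)) : ℝ)
        ≤ (finrank K ↥(V * S ^ (n+1)) : ℝ) + (finrank K ↥(F * S ^ (n+1)) : ℝ) := by
          exact_mod_cast h1
      _ ≤ (1 + 1/t) * v + v/t := add_le_add hVbd h2
      _ = (1 + 2/t) * v := e
      _ ≤ (1 + 2/t) * w := by nlinarith
end Aux

section Main
variable {K : Type*} [Field K] {R : Type*} [Ring R] [Algebra K R]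

lemma aux_amenable_of_finite [FiniteDimensional K R] [Nontrivial R] :
    AmenableAlgebra K R := by
  refine ⟨fun _ => ⊤, monotone_const, fun _ => inferInstance, fun x => ⟨0, trivial⟩, fun r => ?_⟩
  have h0 : (0:ℝ) < finrank K (⊤ : Submodule K R) := by
    rw [finrank_top]
    exact_mod_cast Module.finrank_pos
  have heq : ∀ n : ℕ, (finrank K ↥(rightMulSubmodule K (⊤ : Submodule K R) r ⊔ ⊤) : ℝ) /
      finrank K (⊤ : Submodule K R) = 1 := by
    intro n
    rw [sup_top_eq]
    exact div_self (ne_of_gt h0)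
  exact tendsto_const_nhds.congr fun n => (heq n).symm

end Main

/-- Doubling Lemma: if an affine algebra without zero divisors is not amenable, then there is
a finite dimensional subspace `Z` such that `dim (V·Z) > 2·dim V` for every nonzero finite
dimensional subspace `V`. -/
theorem doubling_lemma (K : Type*) [Field K] (R : Type*) [Ring R] [Algebra K R]
    [Algebra.FiniteType K R] [NoZeroDivisors R]
    (hR : ¬ AmenableAlgebra K R) :
    ∃ Z : Submodule K R, FiniteDimensional K Z ∧
      ∀ V : Submodule K R, FiniteDimensional K V → V ≠ ⊥ →
        2 * (finrank K V : ℝ) < (finrank K ↥(V * Z) : ℝ) := by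
  by_contra hcon0
  push_neg at hcon0
  have hcon : ∀ Z : Submodule K R, FiniteDimensional K Z →
      ∃ V : Submodule K R, FiniteDimensional K V ∧ V ≠ ⊥ ∧
        (finrank K ↥(V * Z) : ℝ) ≤ 2 * finrank K V := by
    intro Z hZ
    obtain ⟨V, hV1, hV2, hV3⟩ := hcon0 Z hZ
    exact ⟨V, hV1, hV2, hV3⟩
  by_cases hfinR : FiniteDimensional K R
  · rcases subsingleton_or_nontrivial R with hss | hnt
    · obtain ⟨V, _, hVne, _⟩ := hcon ⊥ inferInstance
      exact hVne ((Submodule.eq_bot_iff V).mpr fun x _ => Subsingleton.elim x 0)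
    · exact hR aux_amenable_of_finite
  · haveI : Nontrivial R := by
      by_contra hnt
      rw [not_nontrivial_iff_subsingleton] at hnt
      refine hfinR (Module.finite_def.mpr ⟨∅, ?_⟩)
      rw [Finset.coe_empty, Submodule.span_empty]
      exact ((Submodule.eq_bot_iff ⊤).mpr fun x _ => Subsingleton.elim x 0).symm
    obtain ⟨s, hs⟩ := ‹Algebra.FiniteType K R›.out
    set S : Submodule K R := Submodule.span K (insert (1:R) ↑s) with hSdef
    have hS1 : (1:R) ∈ S := Submodule.subset_span (Set.mem_insert _ _)
    have hSfg : S.FG := Submodule.fg_span ((s.finite_toSet).insert 1)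
    have hexh : ∀ x : R, ∃ n, x ∈ S ^ n := by
      intro x
      rw [hSdef]
      exact aux_exhaust (K:=K) (R:=R) (↑s) hs x
    have hUnb : ∀ D : ℕ, ∃ j, D < finrank K ↥(S ^ j) :=
      aux_unbounded hS1 hSfg hexh hfinR
    have hA := aux_lemmaA hcon hS1 hSfg hUnb
    choose Φ hfg' hle' hne' hbd' using hA
    let W : ℕ → {p : Submodule K R // p.FG} := fun n => Nat.rec
      ⟨Φ 0 S hSfg, hfg' 0 S hSfg⟩
      (fun k prev => ⟨Φ (k+1) (prev.1 ⊔ S ^ (k+2)) (prev.2.sup (hSfg.pow (k+2))),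
        hfg' _ _ _⟩) n
    have hWne : ∀ n, (W n).1 ≠ ⊥ := by
      intro n
      cases n with
      | zero => exact hne' 0 S hSfg
      | succ k => exact hne' _ _ _
    have hWbd : ∀ n, (finrank K ↥((W n).1 * S ^ (n+1)) : ℝ) ≤
        (1 + 2/((n:ℝ)+1)) * finrank K ↥(W n).1 := by
      intro n
      cases n with
      | zero => exact hbd' 0 S hSfg
      | succ k => exact hbd' _ _ _
    have hWstep : ∀ n, (W n).1 ≤ (W (n+1)).1 := fun n =>
      le_trans le_sup_left (hle' (n+1) _ _)
    have hWS : ∀ n, S ^ (n+1) ≤ (W n).1 := by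
      intro n
      cases n with
      | zero => exact le_trans (le_of_eq (pow_one S)) (hle' 0 S hSfg)
      | succ k => exact le_trans le_sup_right (hle' _ _ _)
    haveI hWfin : ∀ n, FiniteDimensional K ↥(W n).1 :=
      fun n => Module.Finite.iff_fg.mpr (W n).2
    have hpos : ∀ n, (0:ℝ) < finrank K ↥(W n).1 := by
      intro n
      haveI : Nontrivial ↥(W n).1 := Submodule.nontrivial_iff_ne_bot.mpr (hWne n)
      exact_mod_cast Nat.pos_of_ne_zero (fun h => hWne n (Submodule.finrank_eq_zero.mp h))
    apply hR
    refine ⟨fun n => (W n).1, monotone_nat_of_le_succ hWstep,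
      fun n => hWfin n, ?_, ?_⟩
    · intro x
      obtain ⟨n, hn⟩ := hexh x
      exact ⟨n, hWS n (aux_pow_mono hS1 (Nat.le_succ n) hn)⟩
    · intro r
      obtain ⟨m, hm⟩ := hexh r
      haveI : ∀ n, FiniteDimensional K ↥(rightMulSubmodule K ((W n).1) r ⊔ (W n).1) := by
        intro n
        exact Module.Finite.iff_fg.mpr (((W n).2.map _).sup (W n).2)
      have hlow : ∀ n, (1:ℝ) ≤
          (finrank K ↥(rightMulSubmodule K ((W n).1) r ⊔ (W n).1) : ℝ) /
            finrank K ↥(W n).1 := by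
        intro n
        rw [le_div_iff₀ (hpos n), one_mul]
        exact_mod_cast Submodule.finrank_mono
          (le_sup_right : (W n).1 ≤ rightMulSubmodule K ((W n).1) r ⊔ (W n).1)
      have hup : ∀ n ≥ m, (finrank K ↥(rightMulSubmodule K ((W n).1) r ⊔ (W n).1) : ℝ) /
            finrank K ↥(W n).1 ≤ 1 + 2/((n:ℝ)+1) := by
        intro n hn
        rw [div_le_iff₀ (hpos n)]
        haveI : FiniteDimensional K ↥((W n).1 * S ^ (n+1)) :=
          Module.Finite.iff_fg.mpr ((W n).2.mul (hSfg.pow _))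
        have hsub : rightMulSubmodule K ((W n).1) r ⊔ (W n).1 ≤ (W n).1 * S ^ (n+1) := by
          apply sup_le
          · rintro x ⟨w, hw, rfl⟩
            exact Submodule.mul_mem_mul hw
              (aux_pow_mono hS1 (by omega : m ≤ n+1) hm)
          · exact aux_le_mul (aux_one_mem_pow hS1 (n+1))
        calc (finrank K ↥(rightMulSubmodule K ((W n).1) r ⊔ (W n).1) : ℝ)
            ≤ (finrank K ↥((W n).1 * S ^ (n+1)) : ℝ) := by
              exact_mod_cast Submodule.finrank_mono hsub
          _ ≤ (1 + 2/((n:ℝ)+1)) * finrank K ↥(W n).1 := hWbd n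
      have hupper : Tendsto (fun n : ℕ => 1 + 2/((n:ℝ)+1)) atTop (nhds 1) := by
        have h2 : Tendsto (fun n : ℕ => 2/((n:ℝ)+1)) atTop (nhds 0) := by
          have hcomp := (tendsto_const_div_atTop_nhds_zero_nat (2:ℝ)).comp
            (tendsto_add_atTop_nat 1)
          refine hcomp.congr fun n => ?_
          simp only [Function.comp_apply]
          push_cast
          ring
        have h1 : Tendsto (fun _ : ℕ => (1:ℝ)) atTop (nhds 1) := tendsto_const_nhds
        simpa using h1.add h2
      refine tendsto_of_tendsto_of_tendsto_of_le_of_le' tendsto_const_nhds hupper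
        (Eventually.of_forall hlow) ?_
      filter_upwards [eventually_ge_atTop m] with n hn
      exact hup n hn
end

section
/- Let K be a field and let R be an amenable affine K-algebra without zero divisors. Then there exists a sequence of finite-dimensional K-linear subspaces V̄_1 ⊆ V_1 ⊆ V̄_2 ⊆ V_2 ⊆ ⋯ ⊆ R such that: (i) the sequence {V_n} is a Følner exhaustion of R; (ii) dim_K(V̄_n)/dim_K(V_n) → 1 as n → ∞; and (iii) for every finite-dimensional K-linear subspace Z ⊆ R there exists k > 0 such that for all n > k, V̄_n + V̄_n·Z ⊆ V_n, where V̄_n·Z denotes the K-linear span of products vz with v ∈ V̄_n, z ∈ Z. -/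
open Filter Module

section auxiliary
variable {K : Type*} [Field K] {R : Type*} [Ring R] [Algebra K R]

lemma rightMulSubmodule_eq (W : Submodule K R) (r : R) :
    rightMulSubmodule K W r = W * Submodule.span K {r} := by
  ext x
  simp only [rightMulSubmodule, Submodule.mem_map, Submodule.mem_mul_span_singleton]
  rfl

lemma fd_of_fd_mul (A B : Submodule K R) (hA : FiniteDimensional K A)
    (hB : FiniteDimensional K B) : FiniteDimensional K (A * B) :=
  Module.Finite.iff_fg.mpr ((Module.Finite.iff_fg.mp hA).mul (Module.Finite.iff_fg.mp hB))

lemma fd_rightMulSubmodule (W : Submodule K R) (r : R) (hA : FiniteDimensional K W) :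
    FiniteDimensional K (rightMulSubmodule K W r) :=
  Module.Finite.iff_fg.mpr ((Module.Finite.iff_fg.mp hA).map _)

lemma finrank_sup_transfer (A B C : Submodule K R) [FiniteDimensional K A]
    [FiniteDimensional K B] [FiniteDimensional K C] (hCA : C ≤ A) :
    finrank K ↥(A ⊔ B) + finrank K C ≤ finrank K A + finrank K ↥(C ⊔ B) := by
  have h1 := Submodule.finrank_sup_add_finrank_inf_eq A B
  have h2 := Submodule.finrank_sup_add_finrank_inf_eq C B
  have h3 : finrank K ↥(C ⊓ B) ≤ finrank K ↥(A ⊓ B) :=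
    Submodule.finrank_mono (inf_le_inf_right B hCA)
  omega

lemma finrank_sup_mul_span_list_le (Wn : Submodule K R) [FiniteDimensional K Wn] (l : List R) :
    finrank K ↥(Wn ⊔ Wn * Submodule.span K {x | x ∈ l}) ≤
      finrank K Wn +
        (l.map fun z =>
          finrank K ↥(Wn ⊔ Wn * Submodule.span K {z}) - finrank K Wn).sum := by
  induction l with
  | nil =>
      have : {x : R | x ∈ ([] : List R)} = (∅ : Set R) := by ext x; simp
      rw [this, Submodule.span_empty, Submodule.mul_bot, sup_bot_eq]
      simp
  | cons z l ih =>
      have hset : {x | x ∈ z :: l} = insert z {x | x ∈ l} := by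
        ext x; simp [List.mem_cons]
      rw [hset, Submodule.span_insert, Submodule.mul_sup]
      have fdl : FiniteDimensional K (Submodule.span K {x | x ∈ l}) :=
        FiniteDimensional.span_of_finite K l.finite_toSet
      have fdz : FiniteDimensional K (Submodule.span K ({z} : Set R)) :=
        FiniteDimensional.span_of_finite K (Set.finite_singleton z)
      have fd1 : FiniteDimensional K (Wn * Submodule.span K {x | x ∈ l}) :=
        fd_of_fd_mul _ _ ‹_› fdl
      have fd2 : FiniteDimensional K (Wn * Submodule.span K ({z} : Set R)) :=
        fd_of_fd_mul _ _ ‹_› fdz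
      have key := finrank_sup_transfer (Wn ⊔ Wn * Submodule.span K {x | x ∈ l})
        (Wn * Submodule.span K ({z} : Set R)) Wn le_sup_left
      have hz : finrank K Wn ≤ finrank K ↥(Wn ⊔ Wn * Submodule.span K ({z} : Set R)) :=
        Submodule.finrank_mono le_sup_left
      have hrw : Wn ⊔ (Wn * Submodule.span K ({z} : Set R) ⊔ Wn * Submodule.span K {x | x ∈ l})
          = (Wn ⊔ Wn * Submodule.span K {x | x ∈ l}) ⊔ Wn * Submodule.span K ({z} : Set R) := by
        rw [sup_comm (Wn * Submodule.span K ({z} : Set R)), ← sup_assoc]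
      rw [hrw, List.map_cons, List.sum_cons]
      omega

lemma list_sum_mul_le {a D : ℕ} (l : List ℕ) (h : ∀ t ∈ l, a * t ≤ D) :
    a * l.sum ≤ l.length * D := by
  induction l with
  | nil => simp
  | cons t l ih =>
      have h1 := h t List.mem_cons_self
      have h2 := ih fun t ht => h t (List.mem_cons_of_mem _ ht)
      rw [List.sum_cons, List.length_cons, Nat.mul_add, Nat.add_mul, Nat.one_mul]
      omega

lemma eventually_pos_finrank {W : ℕ → Submodule K R} (hW : FolnerExhaustion K R W) :
    ∀ᶠ n in atTop, 0 < finrank K (W n) := by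
  have h := (hW.2.2.2 1).eventually (eventually_gt_nhds (by norm_num : (1/2:ℝ) < 1))
  filter_upwards [h] with n hn
  by_contra hzero
  push_neg at hzero
  have h0 : finrank K (W n) = 0 := Nat.le_zero.mp hzero
  rw [h0, Nat.cast_zero, div_zero] at hn
  norm_num at hn

lemma eventually_single {W : ℕ → Submodule K R} (hW : FolnerExhaustion K R W)
    (a : ℕ) (ha : 0 < a) (z : R) :
    ∀ᶠ n in atTop,
      a * finrank K ↥(W n ⊔ W n * Submodule.span K {z}) ≤ (a + 1) * finrank K (W n) := by
  have h := (hW.2.2.2 z).eventually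
    (eventually_lt_nhds (by
      have ha' : (0:ℝ) < (a:ℝ) := by exact_mod_cast ha
      have := one_div_pos.mpr ha'
      linarith : (1:ℝ) < 1 + 1/a))
  filter_upwards [h, eventually_pos_finrank hW] with n hn hpos
  rw [rightMulSubmodule_eq, sup_comm] at hn
  set X := finrank K ↥(W n ⊔ W n * Submodule.span K {z})
  set D := finrank K (W n)
  have hD : (0:ℝ) < D := by exact_mod_cast hpos
  rw [div_lt_iff₀ hD] at hn
  have : (a:ℝ) * X < (a + 1) * D := by
    have ha' : (0:ℝ) < a := by exact_mod_cast ha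
    calc (a:ℝ) * X = X * a := by ring
    _ < ((1 + 1/a) * D) * a := by exact mul_lt_mul_of_pos_right hn ha'
    _ = (a + 1) * D := by field_simp
  exact_mod_cast this.le

lemma evA {W : ℕ → Submodule K R} (hW : FolnerExhaustion K R W) (c : ℕ)
    (Z : Submodule K R) (hZ : FiniteDimensional K Z) :
    ∀ᶠ n in atTop, (c+1) * finrank K ↥(W n ⊔ W n * Z) ≤ (c+2) * finrank K (W n) := by
  obtain ⟨s, hs⟩ : Z.FG := Module.Finite.iff_fg.mp hZ
  set l := s.toList with hl
  have hspan : Submodule.span K {x | x ∈ l} = Z := by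
    rw [← hs]; congr 1; ext x; simp [hl]
  rcases Nat.eq_zero_or_pos l.length with hlen | hlen
  · have hnil : l = [] := List.length_eq_zero_iff.mp hlen
    have hZbot : Z = ⊥ := by
      rw [← hspan, hnil]
      have : {x : R | x ∈ ([] : List R)} = (∅ : Set R) := by ext x; simp
      rw [this, Submodule.span_empty]
    filter_upwards with n
    rw [hZbot, Submodule.mul_bot, sup_bot_eq]
    exact Nat.mul_le_mul_right _ (by omega)
  · set a := (c+1) * l.length with ha_def
    have ha : 0 < a := by positivity
    have hall : ∀ᶠ n in atTop, ∀ z ∈ s,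
        a * finrank K ↥(W n ⊔ W n * Submodule.span K {z}) ≤ (a + 1) * finrank K (W n) :=
      (eventually_all_finset s).mpr fun z _ => eventually_single hW a ha z
    filter_upwards [hall, eventually_pos_finrank hW] with n hn hpos
    haveI := hW.2.1 n
    have hbound := finrank_sup_mul_span_list_le (W n) l
    rw [hspan] at hbound
    set D := finrank K (W n) with hD
    set S := (l.map fun z => finrank K ↥(W n ⊔ W n * Submodule.span K {z}) - D).sum with hS
    have hsum : a * S ≤ l.length * D := by
      rw [hS]
      have key : ∀ t ∈ (l.map fun z => finrank K ↥(W n ⊔ W n * Submodule.span K {z}) - D),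
          a * t ≤ D := by
        intro t ht
        obtain ⟨z, hz, rfl⟩ := List.mem_map.mp ht
        have hzs : z ∈ s := by rwa [hl, Finset.mem_toList] at hz
        have h1 := hn z hzs
        haveI : FiniteDimensional K (Submodule.span K ({z} : Set R)) :=
          FiniteDimensional.span_of_finite K (Set.finite_singleton z)
        haveI := fd_of_fd_mul (W n) (Submodule.span K ({z} : Set R)) ‹_› ‹_›
        have hDX : D ≤ finrank K ↥(W n ⊔ W n * Submodule.span K ({z} : Set R)) :=
          Submodule.finrank_mono le_sup_left
        set X := finrank K ↥(W n ⊔ W n * Submodule.span K ({z} : Set R))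
        have e2 : (a+1)*D = a*D + D := by ring
        have e3 : a * (X - D) + a * D = a * X := by
          rw [← Nat.mul_add, Nat.sub_add_cancel hDX]
        omega
      have h := list_sum_mul_le _ key
      rwa [List.length_map] at h
    have hcS : (c+1) * S ≤ D := by
      refine Nat.le_of_mul_le_mul_left ?_ hlen
      calc l.length * ((c+1) * S) = a * S := by rw [ha_def]; ring
      _ ≤ l.length * D := hsum
    have m2 : (c+1) * finrank K ↥(W n ⊔ W n * Z) ≤ (c+1) * (D + S) :=
      Nat.mul_le_mul_left _ hbound
    have m3 : (c+1)*(D+S) = (c+1)*D + (c+1)*S := Nat.mul_add _ _ _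
    have m4 : (c+2)*D = (c+1)*D + D := by ring
    omega

lemma tendsto_ratio_aux (a b : ℝ) (hb : 0 < b) :
    Tendsto (fun n : ℕ => ((n:ℝ) + a) / ((n:ℝ) + b)) atTop (nhds 1) := by
  have h1 : Tendsto (fun n : ℕ => ((n:ℝ) + b)) atTop atTop :=
    tendsto_atTop_add_const_right atTop b tendsto_natCast_atTop_atTop
  have h2 : Tendsto (fun n : ℕ => (a - b) / ((n:ℝ) + b)) atTop (nhds 0) :=
    Tendsto.div_atTop tendsto_const_nhds h1
  have h3 : Tendsto (fun n : ℕ => 1 + (a - b) / ((n:ℝ) + b)) atTop (nhds 1) := by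
    simpa using tendsto_const_nhds.add h2
  refine h3.congr fun n => ?_
  have hnb : ((n:ℝ) + b) ≠ 0 := by positivity
  field_simp
  ring

lemma exists_pow_mem {T : Submodule K R} (h1 : (1:R) ∈ T) (S : Finset R)
    (hS : Algebra.adjoin K (S : Set R) = ⊤) (hST : (S : Set R) ⊆ T) (x : R) :
    ∃ m, x ∈ T ^ m := by
  have hx : x ∈ Algebra.adjoin K (S : Set R) := hS ▸ trivial
  have honele : (1 : Submodule K R) ≤ T := by
    rw [Submodule.one_eq_span, Submodule.span_le, Set.singleton_subset_iff]; exact h1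
  induction hx using Algebra.adjoin_induction with
  | mem z hz => exact ⟨1, by rw [pow_one]; exact hST hz⟩
  | algebraMap r =>
      refine ⟨1, by rw [pow_one, Algebra.algebraMap_eq_smul_one]; exact T.smul_mem r h1⟩
  | add x y hx hy ihx ihy =>
      obtain ⟨m, hm⟩ := ihx
      obtain ⟨k, hk⟩ := ihy
      exact ⟨max m k, add_mem (pow_le_pow_right' honele (le_max_left m k) hm)
        (pow_le_pow_right' honele (le_max_right m k) hk)⟩
  | mul x y hx hy ihx ihy =>
      obtain ⟨m, hm⟩ := ihx
      obtain ⟨k, hk⟩ := ihy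
      exact ⟨m + k, by rw [pow_add]; exact Submodule.mul_mem_mul hm hk⟩

lemma exists_le_of_forall_mem {T : ℕ → Submodule K R} (hmono : Monotone T)
    (hex : ∀ x : R, ∃ m, x ∈ T m) (Z : Submodule K R) (hZ : FiniteDimensional K Z) :
    ∃ m, Z ≤ T m := by
  obtain ⟨s, hs⟩ : Z.FG := Module.Finite.iff_fg.mp hZ
  have : ∀ l : List R, ∃ m, ∀ x ∈ l, x ∈ T m := by
    intro l
    induction l with
    | nil => exact ⟨0, by simp⟩
    | cons z l ih =>
        obtain ⟨m, hm⟩ := ih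
        obtain ⟨k, hk⟩ := hex z
        refine ⟨max m k, fun x hx => ?_⟩
        rcases List.mem_cons.mp hx with rfl | hx
        · exact hmono (le_max_right m k) hk
        · exact hmono (le_max_left m k) (hm x hx)
  obtain ⟨m, hm⟩ := this s.toList
  refine ⟨m, ?_⟩
  rw [← hs, Submodule.span_le]
  intro x hx
  exact hm x (by rwa [Finset.mem_toList])

end auxiliary

/-- For an amenable affine algebra without zero divisors one can construct a nested sequence
`V̄₁ ⊆ V₁ ⊆ V̄₂ ⊆ V₂ ⊆ ⋯` of finite dimensional subspaces such that `{Vₙ}` is a Følner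
exhaustion, `dim V̄ₙ / dim Vₙ → 1`, and for every finite dimensional subspace `Z` eventually
`V̄ₙ + V̄ₙ·Z ⊆ Vₙ`. -/
theorem amenable_nested_sequence (K : Type*) [Field K] (R : Type*) [Ring R] [Algebra K R]
    [Algebra.FiniteType K R] [NoZeroDivisors R]
    (hR : AmenableAlgebra K R) :
    ∃ Vb V : ℕ → Submodule K R,
      (∀ n, FiniteDimensional K (Vb n)) ∧
      (∀ n, Vb n ≤ V n) ∧ (∀ n, V n ≤ Vb (n + 1)) ∧
      FolnerExhaustion K R V ∧
      Filter.Tendsto (fun n => (finrank K (Vb n) : ℝ) / finrank K (V n)) Filter.atTop (nhds 1) ∧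
      ∀ Z : Submodule K R, FiniteDimensional K Z →
        ∃ k, ∀ n > k, Vb n ⊔ Vb n * Z ≤ V n := by
  obtain ⟨W, hW⟩ := hR
  obtain ⟨S, hS⟩ := ‹Algebra.FiniteType K R›.out
  set T : Submodule K R := Submodule.span K (insert (1:R) (S : Set R)) with hT
  have h1T : (1:R) ∈ T := Submodule.subset_span (Set.mem_insert 1 _)
  have honele : (1 : Submodule K R) ≤ T := by
    rw [Submodule.one_eq_span, Submodule.span_le, Set.singleton_subset_iff]; exact h1T
  have hST : (S : Set R) ⊆ T := fun x hx => Submodule.subset_span (Set.mem_insert_of_mem _ hx)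
  have hTfd : FiniteDimensional K T :=
    FiniteDimensional.span_of_finite K ((S.finite_toSet).insert 1)
  have hTpow_fd : ∀ m, FiniteDimensional K (T ^ m : Submodule K R) := by
    intro m
    induction m with
    | zero =>
        rw [pow_zero, Submodule.one_eq_span]
        exact FiniteDimensional.span_of_finite K (Set.finite_singleton 1)
    | succ m ih => rw [pow_succ]; exact fd_of_fd_mul _ _ ih hTfd
  have hTmono : Monotone (fun m => T ^ m : ℕ → Submodule K R) :=
    fun a b hab => pow_le_pow_right' honele hab
  have hTex : ∀ x : R, ∃ m, x ∈ T ^ m := exists_pow_mem h1T S hS hST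
  have fdsup : ∀ (p j : ℕ), FiniteDimensional K ↥(W p ⊔ W p * T ^ j) := by
    intro p j
    haveI := hW.2.1 p
    haveI := fd_of_fd_mul (W p) (T ^ j) ‹_› (hTpow_fd j)
    infer_instance
  have step : ∀ (j M : ℕ) (U : Submodule K R), FiniteDimensional K U →
      ∃ N, M ≤ N ∧ 0 < finrank K (W N) ∧
        (j+1) * finrank K ↥(W N ⊔ W N * T ^ (2*j)) ≤ (j+2) * finrank K (W N) ∧ U ≤ W N := by
    intro j M U hU
    obtain ⟨N0, hN0⟩ := exists_le_of_forall_mem hW.1 hW.2.2.1 U hU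
    have ev := ((evA hW j (T ^ (2*j)) (hTpow_fd _)).and (eventually_pos_finrank hW)).and
      (eventually_ge_atTop (max M N0))
    obtain ⟨N, ⟨h1, h2⟩, h3⟩ := ev.exists
    exact ⟨N, le_trans (le_max_left _ _) h3, h2, h1,
      le_trans hN0 (hW.1 (le_trans (le_max_right _ _) h3))⟩
  let nseq : ℕ → ℕ := fun j => Nat.rec (Classical.choose (step 0 0 ⊥ inferInstance))
    (fun j prev =>
      Classical.choose (step (j+1) (prev+1) (W prev ⊔ W prev * T ^ j) (fdsup prev j))) j
  set Vb : ℕ → Submodule K R := fun j => W (nseq j) with hVb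
  set V : ℕ → Submodule K R := fun j => Vb j ⊔ Vb j * T ^ j with hV
  have hspec0 : (0:ℕ) ≤ nseq 0 ∧ 0 < finrank K (W (nseq 0)) ∧
      (0+1) * finrank K ↥(W (nseq 0) ⊔ W (nseq 0) * T ^ (2*0)) ≤
        (0+2) * finrank K (W (nseq 0)) ∧ (⊥ : Submodule K R) ≤ W (nseq 0) :=
    Classical.choose_spec (step 0 0 ⊥ inferInstance)
  have hspecS : ∀ j, nseq j + 1 ≤ nseq (j+1) ∧ 0 < finrank K (W (nseq (j+1))) ∧
      ((j+1)+1) * finrank K ↥(W (nseq (j+1)) ⊔ W (nseq (j+1)) * T ^ (2*(j+1))) ≤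
        ((j+1)+2) * finrank K (W (nseq (j+1))) ∧
      (W (nseq j) ⊔ W (nseq j) * T ^ j) ≤ W (nseq (j+1)) :=
    fun j => Classical.choose_spec
      (step (j+1) (nseq j + 1) (W (nseq j) ⊔ W (nseq j) * T ^ j) (fdsup (nseq j) j))
  have hpos : ∀ j, 0 < finrank K (Vb j) := by
    intro j
    cases j with
    | zero => exact hspec0.2.1
    | succ j => exact (hspecS j).2.1
  have hP2 : ∀ j, (j+1) * finrank K ↥(Vb j ⊔ Vb j * T ^ (2*j)) ≤ (j+2) * finrank K (Vb j) := by
    intro j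
    cases j with
    | zero => exact hspec0.2.2.1
    | succ j => exact (hspecS j).2.2.1
  have hfdVb : ∀ n, FiniteDimensional K (Vb n) := fun n => hW.2.1 _
  have hfdV : ∀ n, FiniteDimensional K (V n) := fun n => fdsup _ _
  have hVbV : ∀ n, Vb n ≤ V n := fun n => le_sup_left
  have hVVb : ∀ n, V n ≤ Vb (n+1) := fun n => (hspecS n).2.2.2
  have hmonoV : Monotone V := monotone_nat_of_le_succ fun n => le_trans (hVVb n) (hVbV (n+1))
  have hge : ∀ j, j ≤ nseq j := by
    intro j
    induction j with
    | zero => exact Nat.zero_le _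
    | succ j ih => have := (hspecS j).1; omega
  have hfdBig : ∀ j, FiniteDimensional K ↥(Vb j ⊔ Vb j * T ^ (2*j)) := fun j => fdsup _ _
  have hVleBig : ∀ j, V j ≤ Vb j ⊔ Vb j * T ^ (2*j) := fun j =>
    sup_le le_sup_left
      (le_trans (mul_le_mul' le_rfl (hTmono (by omega : j ≤ 2*j))) le_sup_right)
  have hDbV : ∀ j, finrank K (Vb j) ≤ finrank K (V j) := fun j => by
    haveI := hfdV j; exact Submodule.finrank_mono (hVbV j)
  have hBposR : ∀ j, (0:ℝ) < (finrank K (V j) : ℝ) := by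
    intro j
    have h := lt_of_lt_of_le (hpos j) (hDbV j)
    exact_mod_cast h
  have hVbig_rank : ∀ j, (j+1) * finrank K (V j) ≤ (j+2) * finrank K (Vb j) := by
    intro j
    haveI := hfdBig j
    calc (j+1) * finrank K (V j) ≤ (j+1) * finrank K ↥(Vb j ⊔ Vb j * T ^ (2*j)) :=
          Nat.mul_le_mul_left _ (Submodule.finrank_mono (hVleBig j))
    _ ≤ (j+2) * finrank K (Vb j) := hP2 j
  refine ⟨Vb, V, hfdVb, hVbV, hVVb, ⟨hmonoV, hfdV, ?_, ?_⟩, ?_, ?_⟩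
  · -- exhaustion
    intro x
    obtain ⟨m, hm⟩ := hW.2.2.1 x
    exact ⟨m, hVbV m (hW.1 (hge m) hm)⟩
  · -- Folner condition for V
    intro r
    obtain ⟨m0, hm0⟩ := hTex r
    have hrT : Submodule.span K {r} ≤ T ^ m0 := by
      rw [Submodule.span_le, Set.singleton_subset_iff]; exact hm0
    have hub : ∀ᶠ j in atTop,
        (finrank K ↥(rightMulSubmodule K (V j) r ⊔ V j) : ℝ) / finrank K (V j) ≤
          ((j:ℝ)+2)/((j:ℝ)+1) := by
      filter_upwards [eventually_ge_atTop m0] with j hj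
      have hincl : rightMulSubmodule K (V j) r ⊔ V j ≤ Vb j ⊔ Vb j * T ^ (2*j) := by
        refine sup_le ?_ (hVleBig j)
        rw [rightMulSubmodule_eq]
        have hcalc : V j * Submodule.span K {r} ≤ Vb j * T ^ (2*j) := by
          rw [hV]
          calc (Vb j ⊔ Vb j * T ^ j) * Submodule.span K {r}
              = Vb j * Submodule.span K {r} ⊔ (Vb j * T ^ j) * Submodule.span K {r} :=
                Submodule.sup_mul _ _ _
          _ ≤ Vb j * T ^ (2*j) ⊔ Vb j * T ^ (2*j) := by
              refine sup_le_sup (mul_le_mul' le_rfl (hrT.trans (hTmono (by omega)))) ?_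
              rw [mul_assoc]
              refine mul_le_mul' le_rfl ?_
              refine le_trans (mul_le_mul' le_rfl hrT) ?_
              rw [← pow_add]
              exact hTmono (by omega)
          _ = Vb j * T ^ (2*j) := sup_idem _
        exact le_trans hcalc le_sup_right
      haveI := hfdBig j
      haveI := hfdV j
      haveI := fd_rightMulSubmodule (V j) r (hfdV j)
      have hA : finrank K ↥(rightMulSubmodule K (V j) r ⊔ V j) ≤
          finrank K ↥(Vb j ⊔ Vb j * T ^ (2*j)) :=
        Submodule.finrank_mono hincl
      have hnat : (j+1) * finrank K ↥(rightMulSubmodule K (V j) r ⊔ V j) ≤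
          (j+2) * finrank K (V j) := by
        calc (j+1) * finrank K ↥(rightMulSubmodule K (V j) r ⊔ V j)
            ≤ (j+1) * finrank K ↥(Vb j ⊔ Vb j * T ^ (2*j)) := Nat.mul_le_mul_left _ hA
        _ ≤ (j+2) * finrank K (Vb j) := hP2 j
        _ ≤ (j+2) * finrank K (V j) := Nat.mul_le_mul_left _ (hDbV j)
      rw [div_le_div_iff₀ (hBposR j) (by positivity)]
      have : ((j:ℝ)+1) * (finrank K ↥(rightMulSubmodule K (V j) r ⊔ V j) : ℝ) ≤
          ((j:ℝ)+2) * (finrank K (V j) : ℝ) := by exact_mod_cast hnat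
      linarith
    have hlb : ∀ᶠ j in atTop,
        (1:ℝ) ≤ (finrank K ↥(rightMulSubmodule K (V j) r ⊔ V j) : ℝ) / finrank K (V j) := by
      filter_upwards with j
      haveI := hfdV j
      haveI := fd_rightMulSubmodule (V j) r (hfdV j)
      have h : finrank K (V j) ≤ finrank K ↥(rightMulSubmodule K (V j) r ⊔ V j) :=
        Submodule.finrank_mono le_sup_right
      rw [le_div_iff₀ (hBposR j), one_mul]
      exact_mod_cast h
    exact tendsto_of_tendsto_of_tendsto_of_le_of_le' tendsto_const_nhds
      (tendsto_ratio_aux 2 1 one_pos) hlb hub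
  · -- dim Vb / dim V → 1
    have hub : ∀ᶠ j in atTop, (finrank K (Vb j) : ℝ) / finrank K (V j) ≤ 1 := by
      filter_upwards with j
      rw [div_le_one (hBposR j)]
      exact_mod_cast hDbV j
    have hlb : ∀ᶠ j : ℕ in atTop,
        ((j:ℝ)+1)/((j:ℝ)+2) ≤ (finrank K (Vb j) : ℝ) / finrank K (V j) := by
      filter_upwards with j
      rw [div_le_div_iff₀ (by positivity) (hBposR j)]
      have : (j+1) * finrank K (V j) ≤ (j+2) * finrank K (Vb j) := hVbig_rank j
      have hc : ((j:ℝ)+1) * (finrank K (V j) : ℝ) ≤ ((j:ℝ)+2) * (finrank K (Vb j) : ℝ) := by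
        exact_mod_cast this
      linarith
    exact tendsto_of_tendsto_of_tendsto_of_le_of_le' (tendsto_ratio_aux 1 2 two_pos)
      tendsto_const_nhds hlb hub
  · -- eventual absorption of Z
    intro Z hZ
    obtain ⟨m, hm⟩ := exists_le_of_forall_mem hTmono hTex Z hZ
    refine ⟨m, fun n hn => ?_⟩
    simp only [hV]
    exact sup_le_sup le_rfl (mul_le_mul' le_rfl (hm.trans (hTmono (by omega : m ≤ n))))
end

section
/- Let K be a field, R an amenable affine K-algebra without zero divisors, and let V̄_1 ⊆ V_1 ⊆ V̄_2 ⊆ V_2 ⊆ ⋯ be finite-dimensional subspaces such that {V_n} is a Følner exhaustion, dim_K(V̄_n)/dim_K(V_n) → 1, and for every finite-dimensional subspace Z ⊆ R there is k with V̄_n + V̄_n·Z ⊆ V_n whenever n > k. Let {e_i}_{i=1}^∞ be a K-basis of R such that for each i the first dim_K(V̄_i) basis vectors form a basis of V̄_i and the first dim_K(V_i) basis vectors form a basis of V_i. Then for every nonzero s ∈ R, setting F_k(s) = {e_j ∈ V_k : e_j·s ∉ V_k} and B_k(s) = {e_j ∉ V_k : e_j·s ∈ V_k}, one has |F_k(s)|/dim_K(V_k)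 → 0 and |B_k(s)|/dim_K(V_k) → 0 as k → ∞. -/
open Filter Module

/-! Right multiplication by `s ≠ 0` is injective and, once `V̄ₖ·s ⊆ Vₖ`, the indices `j` with
`eⱼ·s ∈ Vₖ` include the first `dim V̄ₖ` ones; being the indices of an independent family inside
`Vₖ`, there are at most `dim Vₖ` of them. Both boundaries therefore have at most
`dim Vₖ - dim V̄ₖ` elements, which is `o(dim Vₖ)` by the ratio condition. -/

theorem Set.ncard_sdiff_add_ncard_le {α : Type*} {A P I : Set α} (hI : I.Finite) (hAP : A ⊆ P)
    (hAI : A ⊆ I) : (I \ P).ncard + A.ncard ≤ I.ncard :=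
  calc (I \ P).ncard + A.ncard ≤ (I \ A).ncard + A.ncard := by
        gcongr
        exact hI.sdiff
    _ = I.ncard := Set.ncard_sdiff_add_ncard_of_subset hAI hI

theorem tendsto_div_zero_of_add_le {ι : Type*} {l : Filter ι} {a b d : ι → ℕ}
    (hb : Tendsto (fun k => (b k : ℝ) / d k) l (nhds 1)) (hle : ∀ᶠ k in l, a k + b k ≤ d k) :
    Tendsto (fun k => (a k : ℝ) / d k) l (nhds 0) := by
  have h : Tendsto (fun k => 1 - (b k : ℝ) / d k) l (nhds 0) := by
    simpa using (tendsto_const_nhds (x := (1 : ℝ))).sub hb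
  refine squeeze_zero' (.of_forall fun k => by positivity) ?_ h
  filter_upwards [hle] with k hk
  rw [le_sub_iff_add_le, ← add_div]
  exact div_le_one_of_le₀ (by exact_mod_cast hk) (Nat.cast_nonneg _)

section

variable {K M : Type*} [Field K] [AddCommGroup M] [Module K M]

theorem LinearIndependent.setOf_mem_span_image {ι : Type*} {v : ι → M}
    (hv : LinearIndependent K v) (T : Set ι) : {i | v i ∈ Submodule.span K (v '' T)} = T :=
  Set.ext fun i =>
    ⟨fun h => by_contra fun hi => hv.notMem_span_image hi h,
      fun hi => Submodule.subset_span ⟨i, hi, rfl⟩⟩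

theorem LinearIndependent.ncard_setOf_mem_le_finrank {ι : Type*} {v : ι → M}
    (hv : LinearIndependent K v) (W : Submodule K M) [FiniteDimensional K W] :
    {i | v i ∈ W}.Finite ∧ {i | v i ∈ W}.ncard ≤ finrank K W := by
  have hvW : LinearIndependent K (fun i : {i | v i ∈ W} => (⟨v i, i.2⟩ : W)) :=
    .of_comp W.subtype (hv.comp _ Subtype.val_injective)
  have := hvW.finite
  have := Fintype.ofFinite {i | v i ∈ W}
  refine ⟨Set.toFinite _, ?_⟩
  rw [← Nat.card_coe_set_eq, Nat.card_eq_fintype_card]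
  exact hvW.fintype_card_le_finrank

theorem ncard_boundary_add_finrank_le {v : ℕ → M} (hv : LinearIndependent K v)
    {f : M →ₗ[K] M} (hf : Function.Injective f) {U W : Submodule K M}
    (hU : Submodule.span K (v '' {j | j < finrank K U}) = U)
    (hW : Submodule.span K (v '' {j | j < finrank K W}) = W)
    (hUW : U ≤ W) (hfU : U.map f ≤ W) :
    {j | v j ∈ W ∧ f (v j) ∉ W}.ncard + finrank K U ≤ finrank K W ∧
      {j | v j ∉ W ∧ f (v j) ∈ W}.ncard + finrank K U ≤ finrank K W := by
  have hmemW := hv.setOf_mem_span_image {j | j < finrank K W}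
  have hmemU := hv.setOf_mem_span_image {j | j < finrank K U}
  rw [hW] at hmemW
  rw [hU] at hmemU
  have hWcard : {j | v j ∈ W}.ncard = finrank K W := hmemW ▸ Set.ncard_Iio_nat _
  have hUcard : {j | v j ∈ U}.ncard = finrank K U := hmemU ▸ Set.ncard_Iio_nat _
  have hWfin : {j | v j ∈ W}.Finite := hmemW ▸ Set.finite_Iio _
  have : FiniteDimensional K W :=
    hW ▸ FiniteDimensional.span_of_finite K ((Set.finite_Iio _).image v)
  obtain ⟨hfWfin, hfWcard⟩ :=
    (hv.map' f (LinearMap.ker_eq_bot.mpr hf)).ncard_setOf_mem_le_finrank W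
  have hforward := Set.ncard_sdiff_add_ncard_le (A := {j | v j ∈ U}) (P := {j | f (v j) ∈ W})
    hWfin (fun j hj => hfU ⟨v j, hj, rfl⟩) (fun j hj => hUW hj)
  rw [hUcard, hWcard] at hforward
  have hbackward_le_forward :=
    (Set.ncard_le_ncard_iff_ncard_sdiff_le_ncard_sdiff hfWfin hWfin).1 (hfWcard.trans hWcard.ge)
  have hbackward : {j | v j ∉ W ∧ f (v j) ∈ W} = {j | f (v j) ∈ W} \ {j | v j ∈ W} :=
    Set.ext fun _ => and_comm
  rw [hbackward]
  exact ⟨hforward, (Nat.add_le_add_right hbackward_le_forward _).trans hforward⟩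

end

theorem folner_boundary_vanishes_general (K : Type*) [Field K] (R : Type*) [Ring R] [Algebra K R]
    [NoZeroDivisors R]
    (Vb V : ℕ → Submodule K R)
    (hVbV : ∀ n, Vb n ≤ V n)
    (hratio : Filter.Tendsto (fun n => (finrank K (Vb n) : ℝ) / finrank K (V n))
      Filter.atTop (nhds 1))
    (habs : ∀ Z : Submodule K R, FiniteDimensional K Z →
      ∃ k, ∀ n > k, Vb n ⊔ Vb n * Z ≤ V n)
    (e : Basis ℕ K R)
    (heVb : ∀ i, Submodule.span K (⇑e '' {j | j < finrank K (Vb i)}) = Vb i)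
    (heV : ∀ i, Submodule.span K (⇑e '' {j | j < finrank K (V i)}) = V i)
    (s : R) (hs : s ≠ 0) :
    Filter.Tendsto
      (fun k => (({j | e j ∈ V k ∧ e j * s ∉ V k} : Set ℕ).ncard : ℝ) / finrank K (V k))
      Filter.atTop (nhds 0) ∧
    Filter.Tendsto
      (fun k => (({j | e j ∉ V k ∧ e j * s ∈ V k} : Set ℕ).ncard : ℝ) / finrank K (V k))
      Filter.atTop (nhds 0) := by
  obtain ⟨k₀, hk₀⟩ := habs (K ∙ s) inferInstance
  have hmulRight (k : ℕ) (hk : k > k₀) : (Vb k).map (LinearMap.mulRight K s) ≤ V k := by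
    rintro _ ⟨x, hx, rfl⟩
    exact (hk₀ k hk).trans' le_sup_right
      (Submodule.mul_mem_mul hx (Submodule.mem_span_singleton_self s))
  have hbound (k : ℕ) (hk : k > k₀) :=
    ncard_boundary_add_finrank_le e.linearIndependent (mul_left_injective₀ hs) (heVb k) (heV k)
      (hVbV k) (hmulRight k hk)
  have hlarge := eventually_gt_atTop k₀
  exact ⟨tendsto_div_zero_of_add_le hratio (hlarge.mono fun k hk => (hbound k hk).1),
    tendsto_div_zero_of_add_le hratio (hlarge.mono fun k hk => (hbound k hk).2)⟩

/-- Given an amenable affine algebra without zero divisors, the nested sequence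
`V̄₁ ⊆ V₁ ⊆ V̄₂ ⊆ V₂ ⊆ ⋯` as in Lemma 3, and a basis `{eᵢ}` adapted to it (initial segments
of the basis span the `V̄ᵢ` and the `Vᵢ`), for every nonzero `s ∈ R` the proportions
`|F_k(s)|/dim V_k` and `|B_k(s)|/dim V_k` tend to `0`, where
`F_k(s) = {e_j ∈ V_k : e_j·s ∉ V_k}` and `B_k(s) = {e_j ∉ V_k : e_j·s ∈ V_k}`. -/
theorem folner_boundary_vanishes (K : Type*) [Field K] (R : Type*) [Ring R] [Algebra K R]
    [Algebra.FiniteType K R] [NoZeroDivisors R]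
    (hR : AmenableAlgebra K R)
    (Vb V : ℕ → Submodule K R)
    (hfin : ∀ n, FiniteDimensional K (Vb n))
    (hVbV : ∀ n, Vb n ≤ V n) (hVVb : ∀ n, V n ≤ Vb (n + 1))
    (hFol : FolnerExhaustion K R V)
    (hratio : Filter.Tendsto (fun n => (finrank K (Vb n) : ℝ) / finrank K (V n))
      Filter.atTop (nhds 1))
    (habs : ∀ Z : Submodule K R, FiniteDimensional K Z →
      ∃ k, ∀ n > k, Vb n ⊔ Vb n * Z ≤ V n)
    (e : Basis ℕ K R)
    (heVb : ∀ i, Submodule.span K (⇑e '' {j | j < finrank K (Vb i)}) = Vb i)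
    (heV : ∀ i, Submodule.span K (⇑e '' {j | j < finrank K (V i)}) = V i)
    (s : R) (hs : s ≠ 0) :
    Filter.Tendsto
      (fun k => (({j | e j ∈ V k ∧ e j * s ∉ V k} : Set ℕ).ncard : ℝ) / finrank K (V k))
      Filter.atTop (nhds 0) ∧
    Filter.Tendsto
      (fun k => (({j | e j ∉ V k ∧ e j * s ∈ V k} : Set ℕ).ncard : ℝ) / finrank K (V k))
      Filter.atTop (nhds 0) :=
  folner_boundary_vanishes_general K R Vb V hVbV hratio habs e heVb heV s hs
end

section
/- Let K be a field and let R be an infinite-dimensional amenable affine K-algebra without zero divisors. Then there exists a K-basis {e_i}_{i=1}^∞ of R and an invariant finitely additive dimension-measure on R with respect to {e_i}_{i=1}^∞. -/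
open Filter Module

/-- A subset `L ⊆ R` is regular with respect to the basis enumeration `e : ℕ → R` if it is
linearly independent over `K` and is a finite disjoint union of sets of the form `Aᵢ·rᵢ`
with `Aᵢ` a subset of the basis and `rᵢ ∈ R`. -/
def RegularSubset (K : Type*) [Field K] {R : Type*} [Ring R] [Algebra K R]
    (e : ℕ → R) (L : Set R) : Prop :=
  LinearIndependent K ((↑) : L → R) ∧
  ∃ (n : ℕ) (A : Fin n → Set R) (r : Fin n → R),
    (∀ i, A i ⊆ Set.range e) ∧
    L = ⋃ i, (fun a => a * r i) '' A i ∧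
    Pairwise fun i j => Disjoint ((fun a => a * r i) '' A i) ((fun a => a * r j) '' A j)

/-- An invariant finitely additive dimension-measure with respect to a basis enumeration
`e : ℕ → R`: a nonnegative function on regular subsets with `μ({eᵢ}) = 1`, `μ ≤ 1`, finitely
additive on disjoint regular sets, and invariant under right multiplication by nonzero
elements. -/
def DimensionMeasure (K : Type*) [Field K] {R : Type*} [Ring R] [Algebra K R]
    (e : ℕ → R) (μ : Set R → ℝ) : Prop :=
  (∀ L : Set R, RegularSubset K e L → 0 ≤ μ L) ∧
  μ (Set.range e) = 1 ∧
  (∀ A : Set R, RegularSubset K e A → μ A ≤ 1) ∧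
  (∀ A B : Set R, RegularSubset K e A → RegularSubset K e B → Disjoint A B →
    RegularSubset K e (A ∪ B) → μ (A ∪ B) = μ A + μ B) ∧
  (∀ (A : Set R) (r : R), RegularSubset K e A → r ≠ 0 →
    μ ((fun a => a * r) '' A) = μ A)

open Submodule

set_option linter.unusedSectionVars false

section Aux

variable {K R : Type*} [Field K] [Ring R] [Algebra K R]

lemma mulRight_injective [NoZeroDivisors R] {r : R} (hr : r ≠ 0) :
    Function.Injective (LinearMap.mulRight K r) := by
  intro a b hab
  simp only [LinearMap.mulRight_apply] at hab
  have : (a - b) * r = 0 := by rw [sub_mul, hab, sub_self]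
  rcases mul_eq_zero.1 this with h | h
  · exact sub_eq_zero.1 h
  · exact absurd h hr

/-- For `Y ≤ Z` finite dimensional and any finite dimensional `V`:
`dim Y + dim (Z ⊓ V) ≤ dim Z + dim (Y ⊓ V)`. -/
lemma finrank_inf_aux (Y Z V : Submodule K R) (hYZ : Y ≤ Z)
    [FiniteDimensional K Z] [FiniteDimensional K V] :
    finrank K Y + finrank K ↥(Z ⊓ V) ≤ finrank K Z + finrank K ↥(Y ⊓ V) := by
  haveI : FiniteDimensional K Y := Submodule.finiteDimensional_of_le hYZ
  haveI : FiniteDimensional K ↥(Z ⊓ V) := Submodule.finiteDimensional_of_le inf_le_left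
  have h1 : finrank K ↥(Y ⊔ (Z ⊓ V)) + finrank K ↥(Y ⊓ (Z ⊓ V)) =
      finrank K Y + finrank K ↥(Z ⊓ V) := Submodule.finrank_sup_add_finrank_inf_eq _ _
  have h2 : Y ⊓ (Z ⊓ V) = Y ⊓ V := by
    rw [inf_comm Z V, ← inf_assoc]
    exact inf_eq_left.2 (inf_le_left.trans hYZ)
  have h3 : Y ⊔ (Z ⊓ V) ≤ Z := sup_le hYZ inf_le_left
  have h4 : finrank K ↥(Y ⊔ (Z ⊓ V)) ≤ finrank K Z := Submodule.finrank_mono h3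
  rw [h2] at h1
  omega

variable [NoZeroDivisors R]

lemma finrank_map_eq {r : R} (hr : r ≠ 0) (X : Submodule K R) [FiniteDimensional K X] :
    finrank K ↥(X.map (LinearMap.mulRight K r)) = finrank K X :=
  (LinearEquiv.finrank_eq (Submodule.equivMapOfInjective _ (mulRight_injective hr) X)).symm

/-- Lemma A, upper bound. -/
lemma lemA_upper {r : R} (hr : r ≠ 0) (X Wm : Submodule K R) [FiniteDimensional K Wm] :
    finrank K ↥(X.map (LinearMap.mulRight K r) ⊓ Wm) + finrank K Wm ≤
      finrank K ↥(X ⊓ Wm) + finrank K ↥(Wm.map (LinearMap.mulRight K r) ⊔ Wm) := by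
  set f := LinearMap.mulRight K r with hf
  haveI : FiniteDimensional K ↥(Wm.map f) := Module.Finite.map _ _
  haveI : FiniteDimensional K ↥(X.map f ⊓ Wm) := Submodule.finiteDimensional_of_le inf_le_right
  haveI : FiniteDimensional K ↥(X ⊓ Wm) := Submodule.finiteDimensional_of_le inf_le_right
  -- core : dim (Xf⊓Wm) + dim (Wm ⊓ Wmf) ≤ dim Wm + dim (Xf ⊓ Wm ⊓ Wmf)
  have core := finrank_inf_aux (K := K) (X.map f ⊓ Wm) Wm (Wm.map f) inf_le_right
  have hXfW : X.map f ⊓ Wm.map f = (X ⊓ Wm).map f := (Submodule.map_inf f (mulRight_injective hr)).symm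
  have h5 : (X.map f ⊓ Wm) ⊓ Wm.map f ≤ (X ⊓ Wm).map f := by
    rw [← hXfW]
    exact le_inf (le_trans inf_le_left inf_le_left) inf_le_right
  have h6 : finrank K ↥((X.map f ⊓ Wm) ⊓ Wm.map f) ≤ finrank K ↥((X ⊓ Wm).map f) := by
    haveI : FiniteDimensional K ↥((X ⊓ Wm).map f) := Module.Finite.map _ _
    exact Submodule.finrank_mono h5
  have h7 : finrank K ↥((X ⊓ Wm).map f) = finrank K ↥(X ⊓ Wm) := finrank_map_eq hr _
  have h8 : finrank K ↥(Wm.map f ⊔ Wm) + finrank K ↥(Wm.map f ⊓ Wm) =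
      finrank K ↥(Wm.map f) + finrank K Wm := Submodule.finrank_sup_add_finrank_inf_eq _ _
  have h9 : finrank K ↥(Wm.map f) = finrank K Wm := finrank_map_eq hr _
  have h10 : finrank K ↥(Wm ⊓ Wm.map f) = finrank K ↥(Wm.map f ⊓ Wm) := by rw [inf_comm]
  omega

/-- Lemma A, lower bound. -/
lemma lemA_lower {r : R} (hr : r ≠ 0) (X Wm : Submodule K R) [FiniteDimensional K Wm] :
    finrank K ↥(X ⊓ Wm) + finrank K Wm ≤
      finrank K ↥(X.map (LinearMap.mulRight K r) ⊓ Wm) + finrank K ↥(Wm.map (LinearMap.mulRight K r) ⊔ Wm) := by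
  set f := LinearMap.mulRight K r with hf
  haveI : FiniteDimensional K ↥(Wm.map f) := Module.Finite.map _ _
  haveI : FiniteDimensional K ↥(X ⊓ Wm) := Submodule.finiteDimensional_of_le inf_le_right
  haveI : FiniteDimensional K ↥((X ⊓ Wm).map f) := Module.Finite.map _ _
  haveI : FiniteDimensional K ↥(X.map f ⊓ Wm) := Submodule.finiteDimensional_of_le inf_le_right
  -- core : Y := (X⊓Wm)f ≤ Z := Wm f, V := Wm
  have core := finrank_inf_aux (K := K) ((X ⊓ Wm).map f) (Wm.map f) Wm
    (Submodule.map_mono inf_le_right)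
  have h1 : finrank K ↥((X ⊓ Wm).map f) = finrank K ↥(X ⊓ Wm) := finrank_map_eq hr _
  have h2 : finrank K ↥(Wm.map f) = finrank K Wm := finrank_map_eq hr _
  have h3 : (X ⊓ Wm).map f ⊓ Wm ≤ X.map f ⊓ Wm :=
    inf_le_inf_right _ (Submodule.map_mono inf_le_left)
  have h4 : finrank K ↥((X ⊓ Wm).map f ⊓ Wm) ≤ finrank K ↥(X.map f ⊓ Wm) :=
    Submodule.finrank_mono h3
  have h8 : finrank K ↥(Wm.map f ⊔ Wm) + finrank K ↥(Wm.map f ⊓ Wm) =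
      finrank K ↥(Wm.map f) + finrank K Wm := Submodule.finrank_sup_add_finrank_inf_eq _ _
  omega

end Aux

section Delta

lemma sub_div_le_defect {x y s d : ℝ} (hd : 0 < d) (h : x + d ≤ y + s) :
    (x - y) / d ≤ s / d - 1 := by
  rw [div_le_iff₀ hd, sub_mul, div_mul_cancel₀ _ hd.ne', one_mul]; linarith

lemma defect_le_sub_div {x y s d : ℝ} (hd : 0 < d) (h : y + d ≤ x + s) :
    1 - s / d ≤ (x - y) / d := by
  rw [le_div_iff₀ hd, sub_mul, one_mul, div_mul_cancel₀ _ hd.ne']; linarith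


variable {K R : Type*} [Field K] [Ring R] [Algebra K R]

/-- relative dimension sequence -/
noncomputable def frN (W : ℕ → Submodule K R) (X : Submodule K R) (m : ℕ) : ℝ :=
  (finrank K ↥(X ⊓ W m) : ℝ) / (finrank K ↥(W m) : ℝ)

/-- the value of the dimension density along the ultrafilter -/
noncomputable def delta (U : Ultrafilter ℕ) (W : ℕ → Submodule K R) (X : Submodule K R) : ℝ :=
  Classical.epsilon fun c => Tendsto (frN W X) ↑U (nhds c)

variable (U : Ultrafilter ℕ) {W : ℕ → Submodule K R}

lemma frN_mem_Icc (hfin : ∀ m, FiniteDimensional K (W m)) (X : Submodule K R) (m : ℕ) :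
    frN W X m ∈ Set.Icc (0:ℝ) 1 := by
  haveI := hfin m
  constructor
  · exact div_nonneg (Nat.cast_nonneg _) (Nat.cast_nonneg _)
  · rcases eq_or_ne (finrank K ↥(W m)) 0 with h | h
    · simp [frN, h]
    · rw [frN, div_le_one (by positivity)]
      exact_mod_cast Submodule.finrank_mono inf_le_right

lemma tendsto_frN_delta (hfin : ∀ m, FiniteDimensional K (W m)) (X : Submodule K R) :
    Tendsto (frN W X) ↑U (nhds (delta U W X)) := by
  apply Classical.epsilon_spec (p := fun c => Tendsto (frN W X) ↑U (nhds c))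
  have h : ↑(U.map (frN W X)) ≤ Filter.principal (Set.Icc (0:ℝ) 1) := by
    rw [Filter.le_principal_iff]
    exact Filter.mem_map.2 (Filter.univ_mem' fun m => frN_mem_Icc hfin X m)
  obtain ⟨c, _, hc⟩ := isCompact_Icc.ultrafilter_le_nhds (U.map (frN W X)) h
  exact ⟨c, hc⟩

lemma delta_unique (hfin : ∀ m, FiniteDimensional K (W m)) {X : Submodule K R} {c : ℝ}
    (h : Tendsto (frN W X) ↑U (nhds c)) : delta U W X = c :=
  tendsto_nhds_unique (tendsto_frN_delta U hfin X) h

lemma delta_mem_Icc (hfin : ∀ m, FiniteDimensional K (W m)) (X : Submodule K R) :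
    delta U W X ∈ Set.Icc (0:ℝ) 1 :=
  isClosed_Icc.mem_of_tendsto (tendsto_frN_delta U hfin X)
    (Filter.Eventually.of_forall fun m => frN_mem_Icc hfin X m)

lemma delta_bot (hfin : ∀ m, FiniteDimensional K (W m)) : delta U W (⊥ : Submodule K R) = 0 := by
  apply delta_unique U hfin
  have : frN W (⊥ : Submodule K R) = fun _ => (0:ℝ) := by
    funext m; simp [frN]
  rw [this]
  exact tendsto_const_nhds

variable (hU : ↑U ≤ (atTop : Filter ℕ)) (hW : FolnerExhaustion K R W)

include hW in
lemma eventually_finrank_pos : ∀ᶠ m in (atTop : Filter ℕ), 0 < finrank K ↥(W m) := by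
  have hrw : ∀ m, rightMulSubmodule K (W m) (1:R) = W m := by
    intro m
    show (W m).map (LinearMap.mulRight K 1) = W m
    have h : LinearMap.mulRight K (1:R) = LinearMap.id := by ext x; simp
    rw [h, Submodule.map_id]
  have h2 := (hW.2.2.2 1).eventually (eventually_gt_nhds (show (1:ℝ)/2 < 1 by norm_num))
  filter_upwards [h2] with m hm
  rw [hrw m, sup_idem] at hm
  by_contra hzero
  push_neg at hzero
  have h0 : finrank K ↥(W m) = 0 := Nat.le_zero.1 hzero
  rw [h0] at hm
  norm_num at hm

include hW in
/-- the relative Følner defect tends to `0`. -/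
lemma tendsto_defect (r : R) :
    Tendsto (fun m => (finrank K ↥((W m).map (LinearMap.mulRight K r) ⊔ W m) : ℝ) /
      (finrank K ↥(W m) : ℝ) - 1) atTop (nhds 0) := by
  have h := hW.2.2.2 r
  have : Tendsto (fun m => (finrank K ↥(rightMulSubmodule K (W m) r ⊔ W m) : ℝ) /
      (finrank K ↥(W m) : ℝ) - 1) atTop (nhds (1 - 1)) := h.sub tendsto_const_nhds
  rw [sub_self] at this
  exact this

include hW hU in
lemma delta_map [NoZeroDivisors R] {r : R} (hr : r ≠ 0) (X : Submodule K R) :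
    delta U W (X.map (LinearMap.mulRight K r)) = delta U W X := by
  have hfin := hW.2.1
  apply delta_unique U hfin
  set f := LinearMap.mulRight K r
  -- the difference tends to 0 along atTop
  have hdiff : Tendsto (fun m => frN W (X.map f) m - frN W X m) atTop (nhds 0) := by
    have hg := tendsto_defect hW r
    have hg' : Tendsto (fun m => -((finrank K ↥((W m).map f ⊔ W m) : ℝ) /
        (finrank K ↥(W m) : ℝ) - 1)) atTop (nhds 0) := by simpa using hg.neg
    apply tendsto_of_tendsto_of_tendsto_of_le_of_le' hg' hg
    · filter_upwards [eventually_finrank_pos hW] with m hm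
      haveI := hfin m
      have hd : (0:ℝ) < (finrank K ↥(W m) : ℝ) := by exact_mod_cast hm
      have key := lemA_lower (K := K) hr X (W m)
      have key' : (finrank K ↥(X ⊓ W m) : ℝ) + finrank K ↥(W m) ≤
          finrank K ↥(X.map f ⊓ W m) + finrank K ↥((W m).map f ⊔ W m) := by exact_mod_cast key
      rw [neg_sub, frN, frN, div_sub_div_same]
      exact defect_le_sub_div hd (by linarith)
    · filter_upwards [eventually_finrank_pos hW] with m hm
      haveI := hfin m
      have hd : (0:ℝ) < (finrank K ↥(W m) : ℝ) := by exact_mod_cast hm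
      have key := lemA_upper (K := K) hr X (W m)
      have key' : (finrank K ↥(X.map f ⊓ W m) : ℝ) + finrank K ↥(W m) ≤
          finrank K ↥(X ⊓ W m) + finrank K ↥((W m).map f ⊔ W m) := by exact_mod_cast key
      rw [frN, frN, div_sub_div_same]
      exact sub_div_le_defect hd (by linarith)
  have hdiffU : Tendsto (fun m => frN W (X.map f) m - frN W X m) ↑U (nhds 0) :=
    hdiff.mono_left hU
  have := (tendsto_frN_delta U hfin X).add hdiffU
  rw [add_zero] at this
  apply this.congr
  intro m; ring

include hW hU in
lemma delta_top : delta U W (⊤ : Submodule K R) = 1 := by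
  have hfin := hW.2.1
  apply delta_unique U hfin
  apply Tendsto.mono_left _ hU
  have : ∀ᶠ m in (atTop : Filter ℕ), frN W (⊤ : Submodule K R) m = 1 := by
    filter_upwards [eventually_finrank_pos hW] with m hm
    have hd : ((finrank K ↥(W m)) : ℝ) ≠ 0 := by positivity
    rw [frN, top_inf_eq, div_self hd]
  exact Tendsto.congr' (by filter_upwards [this] with m hm using hm.symm) tendsto_const_nhds

lemma delta_superadd (hfin : ∀ m, FiniteDimensional K (W m)) {X Y : Submodule K R}
    (hdisj : Disjoint X Y) : delta U W X + delta U W Y ≤ delta U W (X ⊔ Y) := by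
  apply le_of_tendsto_of_tendsto' ((tendsto_frN_delta U hfin X).add (tendsto_frN_delta U hfin Y))
    (tendsto_frN_delta U hfin (X ⊔ Y))
  intro m
  haveI := hfin m
  haveI : FiniteDimensional K ↥(X ⊓ W m) := Submodule.finiteDimensional_of_le inf_le_right
  haveI : FiniteDimensional K ↥(Y ⊓ W m) := Submodule.finiteDimensional_of_le inf_le_right
  have h1 : finrank K ↥((X ⊓ W m) ⊔ (Y ⊓ W m)) + finrank K ↥((X ⊓ W m) ⊓ (Y ⊓ W m)) =
      finrank K ↥(X ⊓ W m) + finrank K ↥(Y ⊓ W m) := Submodule.finrank_sup_add_finrank_inf_eq _ _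
  have h2 : (X ⊓ W m) ⊓ (Y ⊓ W m) = ⊥ := by
    rw [← le_bot_iff]
    calc (X ⊓ W m) ⊓ (Y ⊓ W m) ≤ X ⊓ Y := inf_le_inf inf_le_left inf_le_left
    _ = ⊥ := hdisj.eq_bot
  rw [h2] at h1
  simp only [finrank_bot, add_zero] at h1
  have h3 : (X ⊓ W m) ⊔ (Y ⊓ W m) ≤ (X ⊔ Y) ⊓ W m :=
    sup_le (inf_le_inf le_sup_left le_rfl) (inf_le_inf le_sup_right le_rfl)
  have h4 : finrank K ↥((X ⊓ W m) ⊔ (Y ⊓ W m)) ≤ finrank K ↥((X ⊔ Y) ⊓ W m) :=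
    Submodule.finrank_mono h3
  show frN W X m + frN W Y m ≤ frN W (X ⊔ Y) m
  rw [frN, frN, frN, ← add_div]
  rcases eq_or_ne ((finrank K ↥(W m)) : ℝ) 0 with h | h
  · simp [h]
  · have hd : (0:ℝ) < (finrank K ↥(W m) : ℝ) := lt_of_le_of_ne (Nat.cast_nonneg _) (Ne.symm h)
    gcongr
    exact_mod_cast h1 ▸ h4

end Delta

section BasisAdd

variable {K R : Type*} [Field K] [Ring R] [Algebra K R]
variable (e : Basis ℕ K R)

lemma span_image_inf (a b : Set ℕ) :
    span K (⇑e '' a) ⊓ span K (⇑e '' b) = span K (⇑e '' (a ∩ b)) := by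
  apply le_antisymm
  · intro x hx
    obtain ⟨hxa, hxb⟩ := Submodule.mem_inf.1 hx
    rw [Basis.mem_span_image] at hxa hxb ⊢
    exact Set.subset_inter hxa hxb
  · exact le_inf (span_mono (Set.image_mono Set.inter_subset_left))
      (span_mono (Set.image_mono Set.inter_subset_right))

variable (U : Ultrafilter ℕ) {W : ℕ → Submodule K R}

lemma delta_span_union (hfin : ∀ m, FiniteDimensional K (W m))
    (hadapt : ∀ m, ∃ s : Set ℕ, s.Finite ∧ W m = span K (⇑e '' s))
    {C D : Set R} (hC : C ⊆ Set.range ⇑e) (hD : D ⊆ Set.range ⇑e) (hCD : Disjoint C D) :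
    delta U W (span K (C ∪ D)) = delta U W (span K C) + delta U W (span K D) := by
  set c := ⇑e ⁻¹' C with hc
  set d := ⇑e ⁻¹' D with hd
  have hCc : ⇑e '' c = C := Set.image_preimage_eq_of_subset hC
  have hDd : ⇑e '' d = D := Set.image_preimage_eq_of_subset hD
  have hcd : Disjoint c d := hCD.preimage _
  have key : ∀ m, frN W (span K (C ∪ D)) m = frN W (span K C) m + frN W (span K D) m := by
    intro m
    obtain ⟨s, hsfin, hWm⟩ := hadapt m
    have fin1 : ((c ∩ s) : Set ℕ).Finite := hsfin.subset Set.inter_subset_right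
    have fin2 : ((d ∩ s) : Set ℕ).Finite := hsfin.subset Set.inter_subset_right
    haveI i1 : FiniteDimensional K ↥(span K (⇑e '' (c ∩ s))) :=
      FiniteDimensional.span_of_finite _ (fin1.image _)
    haveI i2 : FiniteDimensional K ↥(span K (⇑e '' (d ∩ s))) :=
      FiniteDimensional.span_of_finite _ (fin2.image _)
    have E1 : span K (C ∪ D) ⊓ W m = span K (⇑e '' (c ∩ s)) ⊔ span K (⇑e '' (d ∩ s)) := by
      rw [hWm, ← hCc, ← hDd, ← Set.image_union, span_image_inf]
      rw [Set.union_inter_distrib_right, Set.image_union, Submodule.span_union]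
    have E2 : span K C ⊓ W m = span K (⇑e '' (c ∩ s)) := by
      rw [hWm, ← hCc, span_image_inf]
    have E3 : span K D ⊓ W m = span K (⇑e '' (d ∩ s)) := by
      rw [hWm, ← hDd, span_image_inf]
    have E4 : span K (⇑e '' (c ∩ s)) ⊓ span K (⇑e '' (d ∩ s)) = ⊥ := by
      rw [span_image_inf]
      have : (c ∩ s) ∩ (d ∩ s) = ∅ := by
        rw [Set.eq_empty_iff_forall_notMem]
        rintro x ⟨⟨hx1, _⟩, ⟨hx2, _⟩⟩
        exact (hcd.ne_of_mem hx1 hx2) rfl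
      rw [this, Set.image_empty, Submodule.span_empty]
    have E5 : finrank K ↥(span K (⇑e '' (c ∩ s)) ⊔ span K (⇑e '' (d ∩ s))) =
        finrank K ↥(span K (⇑e '' (c ∩ s))) + finrank K ↥(span K (⇑e '' (d ∩ s))) := by
      have := Submodule.finrank_sup_add_finrank_inf_eq (span K (⇑e '' (c ∩ s)))
        (span K (⇑e '' (d ∩ s)))
      rw [E4, finrank_bot, add_zero] at this
      exact this
    rw [frN, frN, frN, E1, E2, E3, E5]
    push_cast
    rw [add_div]
  apply delta_unique U hfin
  have h1 := (tendsto_frN_delta U hfin (span K C)).add (tendsto_frN_delta U hfin (span K D))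
  exact h1.congr fun m => (key m).symm

lemma delta_span_biUnion (hfin : ∀ m, FiniteDimensional K (W m))
    (hadapt : ∀ m, ∃ s : Set ℕ, s.Finite ∧ W m = span K (⇑e '' s))
    {ι : Type*} [DecidableEq ι] (t : Finset ι) (C : ι → Set R) (hsub : ∀ i, C i ⊆ Set.range ⇑e)
    (hdis : ∀ i, ∀ j, i ≠ j → Disjoint (C i) (C j)) :
    delta U W (span K (⋃ i ∈ t, C i)) = ∑ i ∈ t, delta U W (span K (C i)) := by
  induction t using Finset.induction_on with
  | empty => simp [delta_bot U hfin]
  | @insert a t hat ih =>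
    rw [Finset.set_biUnion_insert, Finset.sum_insert hat, ← ih]
    apply delta_span_union e U hfin hadapt (hsub a)
    · exact Set.iUnion₂_subset fun i _ => hsub i
    · exact Set.disjoint_iUnion₂_right.2 fun i hi => hdis a i (fun h => hat (h ▸ hi))

lemma sum_delta_le_delta_span (hfin : ∀ m, FiniteDimensional K (W m))
    {L : Set R} (hL : LinearIndependent K ((↑) : L → R)) {ι : Type*} [DecidableEq ι]
    (P : ι → Set R) (hPL : ∀ i, P i ⊆ L)
    (hdis : ∀ i, ∀ j, i ≠ j → Disjoint (P i) (P j)) (t : Finset ι) :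
    (∑ i ∈ t, delta U W (span K (P i))) ≤ delta U W (span K (⋃ i ∈ t, P i)) := by
  induction t using Finset.induction_on with
  | empty => simp [delta_bot U hfin]
  | @insert a t hat ih =>
    rw [Finset.set_biUnion_insert, Finset.sum_insert hat, Submodule.span_union]
    have hdisjset : Disjoint (P a) (⋃ i ∈ t, P i) :=
      Set.disjoint_iUnion₂_right.2 fun i hi => hdis a i (fun h => hat (h ▸ hi))
    have hdisjspan : Disjoint (span K (P a)) (span K (⋃ i ∈ t, P i)) := by
      have h1 : Subtype.val '' ((Subtype.val : L → R) ⁻¹' (P a)) = P a := by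
        rw [Subtype.image_preimage_coe, Set.inter_eq_self_of_subset_right (hPL a)]
      have h2 : Subtype.val '' ((Subtype.val : L → R) ⁻¹' (⋃ i ∈ t, P i)) = ⋃ i ∈ t, P i := by
        rw [Subtype.image_preimage_coe, Set.inter_eq_self_of_subset_right
          (Set.iUnion₂_subset fun i _ => hPL i)]
      have := hL.disjoint_span_image (s := (Subtype.val : L → R) ⁻¹' (P a))
        (t := (Subtype.val : L → R) ⁻¹' (⋃ i ∈ t, P i)) (hdisjset.preimage _)
      rwa [h1, h2] at this
    calc delta U W (span K (P a)) + ∑ i ∈ t, delta U W (span K (P i))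
        ≤ delta U W (span K (P a)) + delta U W (span K (⋃ i ∈ t, P i)) := by
          exact add_le_add_right ih _
      _ ≤ delta U W (span K (P a) ⊔ span K (⋃ i ∈ t, P i)) :=
          delta_superadd U hfin hdisjspan

end BasisAdd

/-- A representation of `L` as a finite disjoint union of right translates of subsets of the
range of `e`. -/
def IsRep {R : Type*} [Ring R] (e : ℕ → R) {ι : Type*} (A : ι → Set R) (r : ι → R)
    (L : Set R) : Prop :=
  (∀ i, A i ⊆ Set.range e) ∧ L = ⋃ i, (fun a => a * r i) '' A i ∧
  Pairwise fun i j => Disjoint ((fun a => a * r i) '' A i) ((fun a => a * r j) '' A j)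

section Rep

variable {K R : Type*} [Field K] [Ring R] [Algebra K R] [NoZeroDivisors R]
variable (e : Basis ℕ K R) (U : Ultrafilter ℕ) {W : ℕ → Submodule K R}

lemma rep_nonzero {L : Set R} (hL : LinearIndependent K ((↑) : L → R))
    {ι : Type*} {A : ι → Set R} {r : ι → R} (h : IsRep ⇑e A r L) {i : ι}
    (hA : (A i).Nonempty) : r i ≠ 0 := by
  intro hri
  obtain ⟨a, ha⟩ := hA
  have h0 : (0 : R) ∈ L := by
    rw [h.2.1]
    refine Set.mem_iUnion.2 ⟨i, ⟨a, ha, ?_⟩⟩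
    show a * r i = 0
    rw [hri, mul_zero]
  exact hL.ne_zero ⟨0, h0⟩ rfl

omit [NoZeroDivisors R] in
lemma span_piece (A : Set R) (r : R) :
    span K ((fun a => a * r) '' A) = (span K A).map (LinearMap.mulRight K r) := by
  have : (fun a => a * r) = ⇑(LinearMap.mulRight K r) := by
    funext a; simp
  rw [this, Submodule.span_image]

variable (hU : ↑U ≤ (atTop : Filter ℕ)) (hW : FolnerExhaustion K R W)

include hU hW in
lemma delta_span_piece {A : Set R} {r : R} (hr : r ≠ 0) :
    delta U W (span K ((fun a => a * r) '' A)) = delta U W (span K A) := by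
  rw [span_piece]
  exact delta_map U hU hW hr _

include hU hW in
lemma rep_sum_eq (hadapt : ∀ m, ∃ s : Set ℕ, s.Finite ∧ W m = span K (⇑e '' s))
    {L : Set R} (hL : LinearIndependent K ((↑) : L → R))
    {ι κ : Type*} [Fintype ι] [Fintype κ]
    {A : ι → Set R} {r : ι → R} {B : κ → Set R} {s : κ → R}
    (h1 : IsRep ⇑e A r L) (h2 : IsRep ⇑e B s L) :
    ∑ i, delta U W (span K (A i)) = ∑ j, delta U W (span K (B j)) := by
  classical
  have hfin := hW.2.1
  set P : ι → Set R := fun i => (fun a => a * r i) '' A i with hP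
  set Q : κ → Set R := fun j => (fun b => b * s j) '' B j with hQ
  set A' : ι → κ → Set R := fun i j => A i ∩ {a | a * r i ∈ Q j} with hA'
  set B' : κ → ι → Set R := fun j i => B j ∩ {b | b * s j ∈ P i} with hB'
  have key4 : ∀ i j, (fun a => a * r i) '' (A' i j) = P i ∩ Q j := by
    intro i j
    ext x
    constructor
    · rintro ⟨a, ⟨haA, haQ⟩, rfl⟩
      exact ⟨⟨a, haA, rfl⟩, haQ⟩
    · rintro ⟨⟨a, haA, rfl⟩, hQ⟩
      exact ⟨a, ⟨haA, hQ⟩, rfl⟩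
  have key4' : ∀ j i, (fun b => b * s j) '' (B' j i) = P i ∩ Q j := by
    intro j i
    ext x
    constructor
    · rintro ⟨b, ⟨hbB, hbP⟩, rfl⟩
      exact ⟨hbP, ⟨b, hbB, rfl⟩⟩
    · rintro ⟨hP', ⟨b, hbB, rfl⟩⟩
      exact ⟨b, ⟨hbB, hP'⟩, rfl⟩
  -- additivity over the refinement, A side
  have claimA : ∀ i, delta U W (span K (A i)) = ∑ j, delta U W (span K (A' i j)) := by
    intro i
    have hcover : A i = ⋃ j ∈ (Finset.univ : Finset κ), A' i j := by
      ext a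
      simp only [Set.mem_iUnion, Finset.mem_univ, exists_prop, true_and]
      constructor
      · intro ha
        have : a * r i ∈ L := by
          rw [h1.2.1]
          exact Set.mem_iUnion.2 ⟨i, ⟨a, ha, rfl⟩⟩
        rw [h2.2.1] at this
        obtain ⟨j, hj⟩ := Set.mem_iUnion.1 this
        exact ⟨j, ha, hj⟩
      · rintro ⟨j, ha, _⟩
        exact ha
    rw [hcover, delta_span_biUnion e U hfin hadapt _ _
      (fun j => Set.inter_subset_left.trans (h1.1 i))]
    intro j j' hjj'
    rw [Set.disjoint_left]
    rintro a ⟨haA, haj⟩ ⟨_, haj'⟩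
    exact Set.disjoint_left.1 (h2.2.2 hjj') haj haj'
  have claimB : ∀ j, delta U W (span K (B j)) = ∑ i, delta U W (span K (B' j i)) := by
    intro j
    have hcover : B j = ⋃ i ∈ (Finset.univ : Finset ι), B' j i := by
      ext b
      simp only [Set.mem_iUnion, Finset.mem_univ, exists_prop, true_and]
      constructor
      · intro hb
        have : b * s j ∈ L := by
          rw [h2.2.1]
          exact Set.mem_iUnion.2 ⟨j, ⟨b, hb, rfl⟩⟩
        rw [h1.2.1] at this
        obtain ⟨i, hi⟩ := Set.mem_iUnion.1 this
        exact ⟨i, hb, hi⟩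
      · rintro ⟨i, hb, _⟩
        exact hb
    rw [hcover, delta_span_biUnion e U hfin hadapt _ _
      (fun i => Set.inter_subset_left.trans (h2.1 j))]
    intro i i' hii'
    rw [Set.disjoint_left]
    rintro b ⟨hbB, hbi⟩ ⟨_, hbi'⟩
    exact Set.disjoint_left.1 (h1.2.2 hii') hbi hbi'
  -- each refined piece has the same delta from both sides
  have claimC : ∀ i j, delta U W (span K (A' i j)) = delta U W (span K (P i ∩ Q j)) := by
    intro i j
    rcases Set.eq_empty_or_nonempty (A' i j) with hemp | hne
    · rw [← key4 i j, hemp, Set.image_empty]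
    · have hAne : (A i).Nonempty := hne.mono Set.inter_subset_left
      rw [← key4 i j]
      exact (delta_span_piece U hU hW (rep_nonzero e hL h1 hAne)).symm
  have claimD : ∀ j i, delta U W (span K (B' j i)) = delta U W (span K (P i ∩ Q j)) := by
    intro j i
    rcases Set.eq_empty_or_nonempty (B' j i) with hemp | hne
    · rw [← key4' j i, hemp, Set.image_empty]
    · have hBne : (B j).Nonempty := hne.mono Set.inter_subset_left
      rw [← key4' j i]
      exact (delta_span_piece U hU hW (rep_nonzero e hL h2 hBne)).symm
  calc ∑ i, delta U W (span K (A i))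
      = ∑ i, ∑ j, delta U W (span K (P i ∩ Q j)) := by
        refine Finset.sum_congr rfl fun i _ => ?_
        rw [claimA i]
        exact Finset.sum_congr rfl fun j _ => claimC i j
    _ = ∑ j, ∑ i, delta U W (span K (P i ∩ Q j)) := Finset.sum_comm
    _ = ∑ j, delta U W (span K (B j)) := by
        refine Finset.sum_congr rfl fun j _ => ?_
        rw [claimB j]
        exact (Finset.sum_congr rfl fun i _ => claimD j i).symm

include hU hW in
lemma rep_sum_le_one {L : Set R} (hL : LinearIndependent K ((↑) : L → R))
    {ι : Type*} [Fintype ι] {A : ι → Set R} {r : ι → R} (h : IsRep ⇑e A r L) :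
    ∑ i, delta U W (span K (A i)) ≤ 1 := by
  classical
  have hfin := hW.2.1
  set P : ι → Set R := fun i => (fun a => a * r i) '' A i with hP
  have step1 : ∀ i, delta U W (span K (A i)) = delta U W (span K (P i)) := by
    intro i
    rcases Set.eq_empty_or_nonempty (A i) with hemp | hne
    · rw [hP]
      simp only [hemp, Set.image_empty]
    · exact (delta_span_piece U hU hW (rep_nonzero e hL h hne) (A := A i)).symm
  have hPL : ∀ i, P i ⊆ L := by
    intro i
    rw [h.2.1]
    exact Set.subset_iUnion _ i
  have hdis : ∀ i, ∀ j, i ≠ j → Disjoint (P i) (P j) := fun i j hij => h.2.2 hij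
  calc ∑ i, delta U W (span K (A i)) = ∑ i, delta U W (span K (P i)) :=
        Finset.sum_congr rfl fun i _ => step1 i
    _ ≤ delta U W (span K (⋃ i ∈ (Finset.univ : Finset ι), P i)) :=
        sum_delta_le_delta_span U hfin hL P hPL hdis _
    _ ≤ 1 := by
        have := delta_mem_Icc U hfin (span K (⋃ i ∈ (Finset.univ : Finset ι), P i))
        exact this.2

end Rep

section BasisConstruction

variable {K R : Type*} [Field K] [Ring R] [Algebra K R]

lemma exists_adapted_basis (hinf : ¬ FiniteDimensional K R) {W : ℕ → Submodule K R}
    (hmono : Monotone W) (hfin : ∀ m, FiniteDimensional K (W m))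
    (hexh : ∀ x : R, ∃ n, x ∈ W n) :
    ∃ e : Basis ℕ K R, ∀ m, ∃ s : Set ℕ, s.Finite ∧ W m = span K (⇑e '' s) := by
  classical
  -- the property of an adapted partial basis
  let P : ℕ → Set R → Prop := fun m b =>
    b ⊆ (W m : Set R) ∧ span K b = W m ∧ LinearIndependent K ((↑) : b → R)
  -- the step: extend
  have step : ∀ m (b : Set R), P m b → ∃ b' : Set R, b ⊆ b' ∧ P (m+1) b' := by
    intro m b hb
    have hsub : b ⊆ (W (m+1) : Set R) := hb.1.trans (hmono (Nat.le_succ m))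
    obtain ⟨b', hb'sub, hbb', hspan, hli⟩ := exists_linearIndepOn_id_extension hb.2.2 hsub
    refine ⟨b', hbb', hb'sub, le_antisymm (Submodule.span_le.2 hb'sub) ?_, hli⟩
    intro x hx
    exact hspan hx
  have base : ∃ b : Set R, P 0 b := by
    obtain ⟨b, hbsub, _, hspan, hli⟩ := exists_linearIndepOn_id_extension
      (linearIndependent_empty K R) (Set.empty_subset (W 0 : Set R))
    exact ⟨b, hbsub, le_antisymm (Submodule.span_le.2 hbsub) (fun x hx => hspan hx), hli⟩
  -- build the chain
  let B : ∀ m : ℕ, {b : Set R // P m b} := fun m =>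
    Nat.rec ⟨base.choose, base.choose_spec⟩
      (fun m prev => ⟨(step m prev.1 prev.2).choose, (step m prev.1 prev.2).choose_spec.2⟩) m
  have hBsucc : ∀ m, (B m).1 ⊆ (B (m+1)).1 := fun m =>
    (step m (B m).1 (B m).2).choose_spec.1
  have hBmono : Monotone fun m => (B m).1 := monotone_nat_of_le_succ hBsucc
  set Bset : Set R := ⋃ m, (B m).1 with hBset
  have hli : LinearIndependent K ((↑) : Bset → R) := by
    apply linearIndepOn_iUnion_of_directed (v := id) (hBmono.directed_le)
    exact fun m => (B m).2.2.2
  have hspan : span K Bset = ⊤ := by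
    rw [eq_top_iff]
    intro x _
    obtain ⟨n, hn⟩ := hexh x
    have : x ∈ span K (B n).1 := by rw [(B n).2.2.1]; exact hn
    exact Submodule.span_mono (Set.subset_iUnion (fun m => (B m).1) n) this
  -- each B m is finite
  have hBfin : ∀ m, ((B m).1).Finite := by
    intro m
    haveI := hfin m
    have hsub := (B m).2.1
    have hli' : LinearIndependent K ((↑) : (B m).1 → R) := (B m).2.2.2
    let v : (B m).1 → W m := fun x => ⟨(x : R), hsub x.2⟩
    have hcomp : (W m).subtype ∘ v = ((↑) : (B m).1 → R) := rfl
    have hv : LinearIndependent K v := by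
      apply LinearIndependent.of_comp ((W m).subtype)
      rw [hcomp]
      exact hli'
    have : Finite ((B m).1 : Set R) := by
      haveI : Module.Finite K (W m) := hfin m
      exact hv.finite_of_isNoetherian
    exact Set.toFinite _
  have hcnt : Bset.Countable := Set.countable_iUnion fun m => (hBfin m).countable
  have hinfB : Bset.Infinite := by
    intro hfinB
    apply hinf
    haveI := FiniteDimensional.span_of_finite K hfinB
    rw [hspan] at this
    exact Module.Finite.equiv (Submodule.topEquiv (R := K) (M := R))
  haveI := hcnt.to_subtype
  haveI := hinfB.to_subtype
  obtain ⟨eqv⟩ : Nonempty (ℕ ≃ Bset) := nonempty_equiv_of_countable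
  -- build the basis
  have hli2 : LinearIndependent K fun n : ℕ => ((eqv n : R)) := by
    have := hli.comp eqv eqv.injective
    exact this
  have hrange : Set.range (fun n : ℕ => ((eqv n : R))) = Bset := by
    ext x
    constructor
    · rintro ⟨n, rfl⟩
      exact (eqv n).2
    · intro hx
      exact ⟨eqv.symm ⟨x, hx⟩, by simp⟩
  have hspan2 : ⊤ ≤ span K (Set.range fun n : ℕ => ((eqv n : R))) := by
    rw [hrange, hspan]
  refine ⟨Basis.mk hli2 hspan2, fun m => ?_⟩
  refine ⟨(fun n : ℕ => ((eqv n : R))) ⁻¹' (B m).1, ?_, ?_⟩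
  · apply Set.Finite.preimage _ (hBfin m)
    intro x _ y _ hxy
    exact eqv.injective (Subtype.val_injective hxy)
  · have hc : ⇑(Basis.mk hli2 hspan2) = fun n : ℕ => ((eqv n : R)) := Basis.coe_mk _ _
    rw [hc]
    have himg : (fun n : ℕ => ((eqv n : R))) '' ((fun n : ℕ => ((eqv n : R))) ⁻¹' (B m).1)
        = (B m).1 := by
      apply Set.image_preimage_eq_of_subset
      intro x hx
      exact ⟨(eqv.symm ⟨x, Set.subset_iUnion (fun k => (B k).1) m hx⟩), by simp⟩
    rw [himg, (B m).2.2.1]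

end BasisConstruction

/-- An infinite dimensional amenable affine algebra without zero divisors admits a basis
together with an invariant finitely additive dimension-measure with respect to it. -/
theorem amenable_exists_dimension_measure (K : Type*) [Field K] (R : Type*) [Ring R]
    [Algebra K R] [Algebra.FiniteType K R] [NoZeroDivisors R]
    (hinf : ¬ FiniteDimensional K R)
    (hR : AmenableAlgebra K R) :
    ∃ (e : Basis ℕ K R) (μ : Set R → ℝ), DimensionMeasure K ⇑e μ := by
  classical
  obtain ⟨W, hW⟩ := hR
  obtain ⟨e, hadapt⟩ := exists_adapted_basis hinf hW.1 hW.2.1 hW.2.2.1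
  set U : Ultrafilter ℕ := Ultrafilter.of atTop with hUdef
  have hU : ↑U ≤ (atTop : Filter ℕ) := Ultrafilter.of_le _
  have hfin := hW.2.1
  set μ : Set R → ℝ := fun L =>
    if h : RegularSubset K ⇑e L then
      ∑ i, delta U W (span K (h.2.choose_spec.choose i))
    else 0 with hμ
  -- the key interface: μ evaluates on any representation
  have hspec : ∀ (L : Set R) (h : RegularSubset K ⇑e L) (ι : Type) [Fintype ι]
      (A : ι → Set R) (r : ι → R), IsRep ⇑e A r L →
      μ L = ∑ i, delta U W (span K (A i)) := by
    intro L h ι _ A r hrep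
    have hchosen : IsRep ⇑e h.2.choose_spec.choose h.2.choose_spec.choose_spec.choose L := by
      obtain ⟨h1, h2, h3⟩ := h.2.choose_spec.choose_spec.choose_spec
      exact ⟨h1, h2, h3⟩
    rw [hμ]
    simp only [dif_pos h]
    exact rep_sum_eq e U hU hW hadapt h.1 hchosen hrep
  refine ⟨e, μ, ?_, ?_, ?_, ?_, ?_⟩
  · -- nonnegativity
    intro L hL
    rw [hμ]
    simp only [dif_pos hL]
    exact Finset.sum_nonneg fun i _ => (delta_mem_Icc U hfin _).1
  · -- μ (range e) = 1
    have himg : (fun a => a * (1:R)) '' (Set.range ⇑e) = Set.range ⇑e := by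
      simp [mul_one]
    have hrep : IsRep ⇑e (fun _ : Fin 1 => Set.range ⇑e) (fun _ => (1:R)) (Set.range ⇑e) := by
      refine ⟨fun _ => subset_rfl, ?_, ?_⟩
      · rw [Set.iUnion_const, himg]
      · intro i j hij
        exact absurd (Subsingleton.elim i j) hij
    have hreg : RegularSubset K ⇑e (Set.range ⇑e) :=
      ⟨(linearIndepOn_id_range_iff e.linearIndependent.injective).2 e.linearIndependent, 1, _, _, hrep.1, hrep.2.1, hrep.2.2⟩
    rw [hspec _ hreg (Fin 1) _ _ hrep, Fin.sum_univ_one, Basis.span_eq,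
      delta_top U hU hW]
  · -- μ ≤ 1
    intro A hA
    obtain ⟨nA, Aa, ra, h1, h2, h3⟩ := id hA.2
    rw [hspec _ hA (Fin nA) Aa ra ⟨h1, h2, h3⟩]
    exact rep_sum_le_one e U hU hW hA.1 ⟨h1, h2, h3⟩
  · -- additivity
    intro A B hA hB hdisj hAB
    obtain ⟨nA, Aa, ra, a1, a2, a3⟩ := id hA.2
    obtain ⟨nB, Ab, rb, b1, b2, b3⟩ := id hB.2
    have hcA : IsRep ⇑e Aa ra A := ⟨a1, a2, a3⟩
    have hcB : IsRep ⇑e Ab rb B := ⟨b1, b2, b3⟩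
    have hrepU : IsRep ⇑e (Sum.elim Aa Ab) (Sum.elim ra rb) (A ∪ B) := by
      refine ⟨?_, ?_, ?_⟩
      · rintro (i | i)
        · exact hcA.1 i
        · exact hcB.1 i
      · rw [Set.iUnion_sum]
        simp only [Sum.elim_inl, Sum.elim_inr]
        rw [← hcA.2.1, ← hcB.2.1]
      · have hPA : ∀ i, (fun a => a * ra i) '' Aa i ⊆ A := by
          intro i
          rw [hcA.2.1]
          exact Set.subset_iUnion (fun k => (fun a => a * ra k) '' Aa k) i
        have hQB : ∀ i, (fun a => a * rb i) '' Ab i ⊆ B := by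
          intro i
          rw [hcB.2.1]
          exact Set.subset_iUnion (fun k => (fun a => a * rb k) '' Ab k) i
        rintro (i | i) (j | j) hij
        · simp only [Sum.elim_inl]
          exact hcA.2.2 (fun h => hij (by rw [h]))
        · simp only [Sum.elim_inl, Sum.elim_inr]
          exact hdisj.mono (hPA i) (hQB j)
        · simp only [Sum.elim_inl, Sum.elim_inr]
          exact (hdisj.mono (hPA j) (hQB i)).symm
        · simp only [Sum.elim_inr]
          exact hcB.2.2 (fun h => hij (by rw [h]))
    rw [hspec _ hAB (Fin nA ⊕ Fin nB) _ _ hrepU, Fintype.sum_sum_type]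
    simp only [Sum.elim_inl, Sum.elim_inr]
    rw [hspec _ hA (Fin nA) _ _ hcA, hspec _ hB (Fin nB) _ _ hcB]
  · -- invariance
    intro A r hA hr
    obtain ⟨nA, Aa, ra, a1, a2, a3⟩ := id hA.2
    have hcA : IsRep ⇑e Aa ra A := ⟨a1, a2, a3⟩
    have hinj : Function.Injective (fun a : R => a * r) := by
      intro a b hab
      exact mulRight_injective (K := K) hr hab
    -- the translated set is regular with an explicit representation
    have hrepAr : IsRep ⇑e Aa (fun i => ra i * r) ((fun a => a * r) '' A) := by
      refine ⟨hcA.1, ?_, ?_⟩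
      · rw [hcA.2.1, Set.image_iUnion]
        refine Set.iUnion_congr fun i => ?_
        ext x
        constructor
        · rintro ⟨y, ⟨a, ha, rfl⟩, rfl⟩
          exact ⟨a, ha, by simp [mul_assoc]⟩
        · rintro ⟨a, ha, rfl⟩
          exact ⟨a * ra i, ⟨a, ha, rfl⟩, by simp [mul_assoc]⟩
      · intro i j hij
        have hd : Disjoint ((fun a => a * ra i) '' Aa i) ((fun a => a * ra j) '' Aa j) :=
          hcA.2.2 hij
        rw [Set.disjoint_left] at hd
        rw [Set.disjoint_left]
        rintro x ⟨a, ha, rfl⟩ ⟨b, hb, hba⟩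
        have h1 : (b * ra j) * r = (a * ra i) * r := by
          rw [mul_assoc, mul_assoc]
          exact hba
        have h2 : b * ra j = a * ra i := hinj h1
        exact hd ⟨a, ha, rfl⟩ ⟨b, hb, h2⟩
    have hindep : LinearIndependent K ((↑) : ((fun a => a * r) '' A) → R) := by
      have hker : Disjoint (span K A) (LinearMap.ker (LinearMap.mulRight K r)) := by
        rw [LinearMap.ker_eq_bot.2 (mulRight_injective (K := K) hr)]
        exact disjoint_bot_right
      have := LinearIndepOn.image (f := LinearMap.mulRight K r) hA.1 hker
      have himg : ⇑(LinearMap.mulRight K r) '' A = (fun a => a * r) '' A := rfl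
      rwa [himg] at this
    have hregAr : RegularSubset K ⇑e ((fun a => a * r) '' A) :=
      ⟨hindep, nA, Aa, fun i => ra i * r, hrepAr.1, hrepAr.2.1, hrepAr.2.2⟩
    rw [hspec _ hregAr (Fin nA) _ _ hrepAr, hspec _ hA (Fin nA) _ _ hcA]
end

section
/- Let K be a field, let e_1, e_2, …, e_m be a basis of the m-dimensional vector space K^m, and let T_1, T_2, …, T_k be linear transformations from K^m to K^n. Suppose that for every l and every l-tuple {e_{i_1}, …, e_{i_l}} of distinct basis vectors, the K-linear span of the vectors {T_j(e_{i_t}) : 1 ≤ t ≤ l, 1 ≤ j ≤ k} has dimension at least 2l. Then there exist two functions φ, ψ : {1, 2, …, m} → {1, 2, …, k} such that the 2m vectors T_{φ(1)}(e_1), …, T_{φ(m)}(e_m), T_{ψ(1)}(e_1), …, T_{ψ(m)}(e_m) are linearly independent. -/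
/-!
Duplicate every index: the family `i ↦ {T j (e i) | j}` indexed by two copies of `Fin m` satisfies
Rado's condition (any `s` of its members span a space of dimension `≥ #s`) precisely because of
the doubled hypothesis, so Rado's theorem for linear matroids yields an independent transversal,
whose two halves are `φ` and `ψ`. Rado's theorem is proved by shrinking candidate sets: if a set
has two elements `x ≠ y` and neither can be removed, the two violating subfamilies contradict the
submodularity of `dim span`.
-/

open Module Submodule Function

theorem update_erase_subset {ι α : Type*} [DecidableEq ι] [DecidableEq α] (A : ι → Finset α)
    (i₀ : ι) (z : α) (i : ι) : update A i₀ ((A i₀).erase z) i ⊆ A i := by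
  rcases eq_or_ne i i₀ with rfl | hi
  · simp [Finset.erase_subset]
  · simp [hi]

section

variable {K V : Type*} [Field K] [AddCommGroup V] [Module K V]

theorem Set.finrank_mono_of_finite {X Y : Set V} (hY : Y.Finite) (h : X ⊆ Y) :
    X.finrank K ≤ Y.finrank K :=
  have := FiniteDimensional.span_of_finite K hY
  Submodule.finrank_mono (span_mono h)

theorem Set.finrank_union_add_finrank_inter_le {X Y : Set V} (hX : X.Finite) (hY : Y.Finite) :
    (X ∪ Y).finrank K + (X ∩ Y).finrank K ≤ X.finrank K + Y.finrank K := by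
  have := FiniteDimensional.span_of_finite K hX
  have := FiniteDimensional.span_of_finite K hY
  have hinter : span K (X ∩ Y) ≤ span K X ⊓ span K Y :=
    le_inf (span_mono Set.inter_subset_left) (span_mono Set.inter_subset_right)
  calc (X ∪ Y).finrank K + (X ∩ Y).finrank K
      ≤ finrank K ↥(span K X ⊔ span K Y) + finrank K ↥(span K X ⊓ span K Y) := by
        rw [Set.finrank, span_union]
        gcongr
        exact Submodule.finrank_mono hinter
    _ = X.finrank K + Y.finrank K := finrank_sup_add_finrank_inf_eq _ _

variable {ι : Type*}

variable (K) in
def RadoCondition (A : ι → Finset V) : Prop :=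
  ∀ s : Finset ι, s.card ≤ (⋃ i ∈ s, (A i : Set V)).finrank K

namespace RadoCondition

variable {A : ι → Finset V}

theorem nonempty (hA : RadoCondition K A) (i : ι) : (A i).Nonempty := by
  have h := hA {i}
  rw [Finset.nonempty_iff_ne_empty]
  rintro hi
  simp [hi] at h

theorem linearIndependent_of_forall_eq_singleton [Fintype ι] (hA : RadoCondition K A)
    {f : ι → V} (hf : ∀ i, A i = {f i}) : LinearIndependent K f := by
  rw [linearIndependent_iff_card_le_finrank_span]
  simpa [hf, Set.iUnion_singleton_eq_range] using hA Finset.univ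

theorem mem_of_lt_finrank_update [DecidableEq ι] {i₀ : ι} {B : Finset V} {s : Finset ι}
    (hA : RadoCondition K A)
    (hs : (⋃ i ∈ s, (update A i₀ B i : Set V)).finrank K < s.card) : i₀ ∈ s := by
  by_contra h
  have hunion : (⋃ i ∈ s, (update A i₀ B i : Set V)) = ⋃ i ∈ s, (A i : Set V) :=
    Set.iUnion₂_congr fun i hi => by rw [update_of_ne (ne_of_mem_of_not_mem hi h)]
  exact (hA s).not_gt (hunion ▸ hs)

theorem update_erase_or_update_erase [DecidableEq ι] [DecidableEq V] {i₀ : ι} {x y : V}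
    (hA : RadoCondition K A) (hx : x ∈ A i₀) (hy : y ∈ A i₀) (hxy : x ≠ y) :
    RadoCondition K (update A i₀ ((A i₀).erase x)) ∨
      RadoCondition K (update A i₀ ((A i₀).erase y)) := by
  by_contra! h
  simp only [RadoCondition, not_forall, not_le] at h
  obtain ⟨⟨s, hs⟩, t, ht⟩ := h
  set X := ⋃ i ∈ s, (update A i₀ ((A i₀).erase x) i : Set V)
  set Y := ⋃ i ∈ t, (update A i₀ ((A i₀).erase y) i : Set V)
  have hs₀ : i₀ ∈ s := hA.mem_of_lt_finrank_update hs
  have ht₀ : i₀ ∈ t := hA.mem_of_lt_finrank_update ht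
  have hX : X.Finite := s.finite_toSet.biUnion fun i _ => Finset.finite_toSet _
  have hY : Y.Finite := t.finite_toSet.biUnion fun i _ => Finset.finite_toSet _
  have hunion : (⋃ i ∈ s ∪ t, (A i : Set V)) ⊆ X ∪ Y := by
    intro v
    simp only [X, Y, Set.mem_iUnion, Finset.mem_coe, Finset.mem_union, Set.mem_union,
      update_apply, exists_prop]
    rintro ⟨i, hi, hv⟩
    by_cases hi₀ : i = i₀
    · subst hi₀
      by_cases hvx : v = x
      · exact .inr ⟨i, ht₀, by rw [if_pos rfl, Finset.mem_erase]; exact ⟨hvx ▸ hxy, hv⟩⟩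
      · exact .inl ⟨i, hs₀, by simp [hvx, hv]⟩
    · rcases hi with hi | hi
      · exact .inl ⟨i, hi, by simp [hi₀, hv]⟩
      · exact .inr ⟨i, hi, by simp [hi₀, hv]⟩
  have hinter : (⋃ i ∈ (s ∩ t).erase i₀, (A i : Set V)) ⊆ X ∩ Y := by
    intro v
    simp only [X, Y, Set.mem_iUnion, Finset.mem_coe, Finset.mem_erase, Finset.mem_inter,
      Set.mem_inter_iff, update_apply, exists_prop]
    rintro ⟨i, ⟨hi₀, his, hit⟩, hv⟩
    exact ⟨⟨i, his, by simp [hi₀, hv]⟩, ⟨i, hit, by simp [hi₀, hv]⟩⟩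
  -- `X ∪ Y` still sees all of `A i₀` and `X ∩ Y` all of `(s ∩ t).erase i₀`, so submodularity
  -- gives `#s + #t - 1 ≤ dim X + dim Y ≤ #s + #t - 2`.
  have h₁ := (hA _).trans (Set.finrank_mono_of_finite (K := K) (hX.union hY) hunion)
  have h₂ := (hA _).trans (Set.finrank_mono_of_finite (K := K) (hX.inter_of_left Y) hinter)
  have h₃ := Set.finrank_union_add_finrank_inter_le (K := K) hX hY
  have h₄ := Finset.card_union_add_card_inter s t
  have h₅ := Finset.card_erase_of_mem (Finset.mem_inter.mpr ⟨hs₀, ht₀⟩)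
  have h₆ := Finset.card_pos.mpr ⟨i₀, Finset.mem_inter.mpr ⟨hs₀, ht₀⟩⟩
  omega

theorem exists_linearIndependent [Finite ι] (hA : RadoCondition K A) :
    ∃ f : ι → V, (∀ i, f i ∈ A i) ∧ LinearIndependent K f := by
  classical
  have := Fintype.ofFinite ι
  induction hN : ∑ i, (A i).card using Nat.strong_induction_on generalizing A with
  | _ N ih =>
  by_cases hbig : ∃ i₀, 1 < (A i₀).card
  · obtain ⟨i₀, hi₀⟩ := hbig
    obtain ⟨x, hx, y, hy, hxy⟩ := Finset.one_lt_card.mp hi₀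
    have shrink : ∀ z ∈ A i₀, RadoCondition K (update A i₀ ((A i₀).erase z)) →
        ∃ f : ι → V, (∀ i, f i ∈ A i) ∧ LinearIndependent K f := by
      intro z hz hA'
      have hlt : ∑ i, (update A i₀ ((A i₀).erase z) i).card < N :=
        hN ▸ Finset.sum_lt_sum (fun i _ => Finset.card_le_card (update_erase_subset A i₀ z i))
          ⟨i₀, Finset.mem_univ _, by simpa using Finset.card_erase_lt_of_mem hz⟩
      obtain ⟨f, hf, hli⟩ := ih _ hlt hA' rfl
      exact ⟨f, fun i => update_erase_subset A i₀ z i (hf i), hli⟩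
    rcases hA.update_erase_or_update_erase hx hy hxy with hA' | hA'
    exacts [shrink x hx hA', shrink y hy hA']
  · simp only [not_exists, not_lt] at hbig
    choose f hf using fun i => Finset.card_eq_one.mp ((hbig i).antisymm (hA.nonempty i).card_pos)
    exact ⟨f, fun i => by simp [hf], hA.linearIndependent_of_forall_eq_singleton hf⟩

end RadoCondition

theorem exists_linearIndependent_sum_elim_of_two_mul_card_le [Finite ι] (B : ι → Finset V)
    (hB : ∀ s : Finset ι, 2 * s.card ≤ (⋃ i ∈ s, (B i : Set V)).finrank K) :
    ∃ f g : ι → V, (∀ i, f i ∈ B i) ∧ (∀ i, g i ∈ B i) ∧ LinearIndependent K (Sum.elim f g) := by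
  classical
  have hA : RadoCondition K (B ∘ Sum.elim id id) := by
    intro s
    set t := s.image (Sum.elim id id)
    have hst : s ⊆ t.disjSum t := by
      rintro (i | i) hi
      all_goals simpa [t] using Finset.mem_image_of_mem (Sum.elim id id) hi
    calc s.card ≤ 2 * t.card := by
          simpa [two_mul] using Finset.card_le_card hst
      _ ≤ (⋃ i ∈ t, (B i : Set V)).finrank K := hB t
      _ = _ := by rw [Finset.set_biUnion_finset_image]; rfl
  obtain ⟨f, hf, hli⟩ := hA.exists_linearIndependent
  refine ⟨f ∘ Sum.inl, f ∘ Sum.inr, fun i => hf (.inl i), fun i => hf (.inr i), ?_⟩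
  rwa [Sum.elim_comp_inl_inr]

end

/-- Doubling Hall lemma: if every `l`-tuple of distinct basis vectors of `K^m` has the span of
all its images under `T₁, …, T_k` at least `2l`-dimensional, then there are
`φ, ψ : {1,…,m} → {1,…,k}` such that the `2m` vectors
`T_{φ(i)}(e_i), T_{ψ(i)}(e_i)` are linearly independent. -/
theorem linear_hall_lemma_doubling {K : Type*} [Field K] {m n k : ℕ}
    (e : Basis (Fin m) K (Fin m → K))
    (T : Fin k → ((Fin m → K) →ₗ[K] (Fin n → K)))
    (hT : ∀ s : Finset (Fin m),
      2 * s.card ≤ finrank K (Submodule.span K {v : Fin n → K | ∃ i ∈ s, ∃ j, v = T j (e i)})) :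
    ∃ φ ψ : Fin m → Fin k,
      LinearIndependent K
        (Sum.elim (fun i => T (φ i) (e i)) (fun i : Fin m => T (ψ i) (e i))) := by
  classical
  let B : Fin m → Finset (Fin n → K) := fun i => Finset.univ.image fun j => T j (e i)
  have hB : ∀ s : Finset (Fin m), 2 * s.card ≤ (⋃ i ∈ s, (B i : Set (Fin n → K))).finrank K := by
    intro s
    have hset : (⋃ i ∈ s, (B i : Set (Fin n → K))) = {v | ∃ i ∈ s, ∃ j, v = T j (e i)} := by
      ext v
      simp [B, eq_comm]
    rw [hset]
    exact hT s
  obtain ⟨f, g, hf, hg, hli⟩ := exists_linearIndependent_sum_elim_of_two_mul_card_le B hB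
  simp only [B, Finset.mem_image, Finset.mem_univ, true_and] at hf hg
  choose φ hφ using hf
  choose ψ hψ using hg
  exact ⟨φ, ψ, by simpa only [hφ, hψ] using hli⟩
end

section
/- Let K be a field and let Γ be a finitely generated group admitting a Følner exhaustion, i.e. an increasing sequence of finite subsets F_1 ⊆ F_2 ⊆ ⋯ with ⋃_n F_n = Γ such that for every g ∈ Γ, |F_n ∪ F_n·g|/|F_n| → 1 as n → ∞. Then the group algebra K[Γ] is an amenable affine K-algebra. -/
open Filter Module Pointwise

set_option maxHeartbeats 1000000
set_option synthInstance.maxHeartbeats 400000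

/-- The subspace of the group algebra spanned by a finite set of group elements. -/
noncomputable def groupAlgSupported (K : Type*) [Field K] {Γ : Type*} [Group Γ] (s : Finset Γ) :
    Submodule K (MonoidAlgebra K Γ) :=
  MonoidAlgebra.supported K K (↑s : Set Γ)

theorem groupAlgSupported_mono (K : Type*) [Field K] {Γ : Type*} [Group Γ] {s t : Finset Γ}
    (h : s ⊆ t) : groupAlgSupported K s ≤ groupAlgSupported K t :=
  MonoidAlgebra.supported_mono (by exact_mod_cast h)

theorem mem_groupAlgSupported (K : Type*) [Field K] {Γ : Type*} [Group Γ] {s : Finset Γ}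
    {x : MonoidAlgebra K Γ} : x ∈ groupAlgSupported K s ↔ ↑x.coeff.support ⊆ (↑s : Set Γ) :=
  MonoidAlgebra.mem_supported

theorem groupAlgSupported_fd (K : Type*) [Field K] {Γ : Type*} [Group Γ] (s : Finset Γ) :
    FiniteDimensional K (groupAlgSupported K s) :=
  Module.Finite.equiv (MonoidAlgebra.supportedEquivFinsupp (R := K) (S := K) (↑s : Set Γ)).symm

theorem groupAlgSupported_finrank (K : Type*) [Field K] {Γ : Type*} [Group Γ] (s : Finset Γ) :
    finrank K (groupAlgSupported K s) = s.card := by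
  unfold groupAlgSupported
  rw [(MonoidAlgebra.supportedEquivFinsupp (R := K) (S := K) (↑s : Set Γ)).finrank_eq, Module.finrank_finsupp_self]
  simp


/-- If `Γ` is a finitely generated group with a Følner exhaustion, then the group algebra
`K[Γ]` is an amenable affine `K`-algebra. -/
theorem groupAlgebra_amenable (K : Type*) [Field K] (Γ : Type*) [Group Γ] [Group.FG Γ]
    [DecidableEq Γ]
    (F : ℕ → Finset Γ) (hmono : Monotone F)
    (hcover : ∀ g : Γ, ∃ n, g ∈ F n)
    (hFol : ∀ g : Γ,
      Filter.Tendsto (fun n => (((F n ∪ (F n).image (· * g)).card : ℝ)) / (F n).card)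
        Filter.atTop (nhds 1)) :
    Algebra.FiniteType K (MonoidAlgebra K Γ) ∧ AmenableAlgebra K (MonoidAlgebra K Γ) := by
  constructor
  · haveI : Monoid.FG Γ := Group.fg_iff_monoid_fg.mp inferInstance
    infer_instance
  set W : ℕ → Submodule K (MonoidAlgebra K Γ) := fun n => groupAlgSupported K (F n) with hWdef
  refine ⟨W, ?_, fun n => groupAlgSupported_fd K (F n), ?_, ?_⟩
  · exact fun a b hab => groupAlgSupported_mono K (hmono hab)
  · intro x
    refine ⟨x.coeff.support.sup fun g => (hcover g).choose, ?_⟩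
    rw [hWdef, mem_groupAlgSupported]
    intro g hg
    simp only [Finset.mem_coe] at hg ⊢
    exact hmono (Finset.le_sup hg) (hcover g).choose_spec
  intro r
  have hrankW : ∀ n, finrank K (W n) = (F n).card := fun n => groupAlgSupported_finrank K (F n)
  -- eventually F n is nonempty
  have hpos : ∀ᶠ n in atTop, 0 < ((F n).card : ℝ) := by
    filter_upwards [(hFol 1).eventually (eventually_gt_nhds zero_lt_one)] with n hn
    by_contra h
    push_neg at h
    have : ((F n).card : ℝ) = 0 := le_antisymm h (by positivity)
    rw [this, div_zero] at hn
    norm_num at hn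
  -- the sup is contained in a supported submodule
  have hle : ∀ n, rightMulSubmodule K (W n) r ⊔ W n
      ≤ groupAlgSupported K (F n ∪ F n * r.coeff.support) := by
    intro n
    refine sup_le ?_ (groupAlgSupported_mono K Finset.subset_union_left)
    rintro x ⟨w, hw, rfl⟩
    have hw' : (↑w.coeff.support : Set Γ) ⊆ ↑(F n) := (mem_groupAlgSupported K).mp hw
    rw [mem_groupAlgSupported]
    simp only [LinearMap.mulRight_apply]
    refine (Finset.coe_subset.mpr ((MonoidAlgebra.support_coeff_mul_subset w r).trans ?_)).trans
      (by exact_mod_cast Finset.subset_union_right)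
    exact Finset.mul_subset_mul_right (by exact_mod_cast hw')
  have hfd : ∀ n, FiniteDimensional K ↥(rightMulSubmodule K (W n) r ⊔ W n) := fun n =>
    haveI := groupAlgSupported_fd K (F n ∪ F n * r.coeff.support)
    Submodule.finiteDimensional_of_le (hle n)
  have hdim : ∀ n, finrank K ↥(rightMulSubmodule K (W n) r ⊔ W n)
      ≤ (F n ∪ F n * r.coeff.support).card := by
    intro n
    haveI := groupAlgSupported_fd K (F n ∪ F n * r.coeff.support)
    rw [← groupAlgSupported_finrank K (F n ∪ F n * r.coeff.support)]
    exact Submodule.finrank_mono (hle n)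
  -- cardinality bound
  have hcard : ∀ n, ((F n ∪ F n * r.coeff.support).card : ℝ)
      ≤ (F n).card + ∑ g ∈ r.coeff.support, (((F n ∪ (F n).image (· * g)).card : ℝ) - (F n).card) := by
    intro n
    have hsub : (F n ∪ F n * r.coeff.support) \ F n
        ⊆ r.coeff.support.biUnion fun g => (F n).image (· * g) \ F n := by
      intro x hx
      rw [Finset.mem_sdiff, Finset.mem_union] at hx
      obtain ⟨hx1 | hx1, hx2⟩ := hx
      · exact absurd hx1 hx2
      · rw [Finset.mem_mul] at hx1
        obtain ⟨a, ha, g, hg, rfl⟩ := hx1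
        exact Finset.mem_biUnion.mpr ⟨g, hg, Finset.mem_sdiff.mpr
          ⟨Finset.mem_image_of_mem _ ha, hx2⟩⟩
    have h1 : ((F n ∪ F n * r.coeff.support) \ F n).card + (F n).card
        = (F n ∪ F n * r.coeff.support).card :=
      Finset.card_sdiff_add_card_eq_card Finset.subset_union_left
    have h2 : ((F n ∪ F n * r.coeff.support) \ F n).card
        ≤ ∑ g ∈ r.coeff.support, ((F n).image (· * g) \ F n).card :=
      (Finset.card_le_card hsub).trans Finset.card_biUnion_le
    have h3 : ∀ g : Γ, (((F n).image (· * g) \ F n).card : ℝ)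
        = ((F n ∪ (F n).image (· * g)).card : ℝ) - (F n).card := by
      intro g
      have he : (F n ∪ (F n).image (· * g)) \ F n = (F n).image (· * g) \ F n := by
        ext x; simp only [Finset.mem_sdiff, Finset.mem_union]; tauto
      rw [← he, Finset.card_sdiff_of_subset Finset.subset_union_left,
        Nat.cast_sub (Finset.card_le_card Finset.subset_union_left)]
    calc ((F n ∪ F n * r.coeff.support).card : ℝ)
        = (((F n ∪ F n * r.coeff.support) \ F n).card : ℝ) + (F n).card := by exact_mod_cast h1.symm
      _ ≤ (∑ g ∈ r.coeff.support, (((F n).image (· * g) \ F n).card : ℝ)) + (F n).card := by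
          exact add_le_add_left (by exact_mod_cast h2) _
      _ = (F n).card + ∑ g ∈ r.coeff.support, (((F n ∪ (F n).image (· * g)).card : ℝ) - (F n).card) := by
          rw [add_comm]
          congr 1
          exact Finset.sum_congr rfl fun g _ => h3 g
  -- squeeze
  have hup : Tendsto
      (fun n => (1 : ℝ) + ∑ g ∈ r.coeff.support,
        ((((F n ∪ (F n).image (· * g)).card : ℝ)) / (F n).card - 1)) atTop (nhds 1) := by
    have h0 : Tendsto (fun n => ∑ g ∈ r.coeff.support,
        ((((F n ∪ (F n).image (· * g)).card : ℝ)) / (F n).card - 1)) atTop (nhds 0) := by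
      have := tendsto_finset_sum r.coeff.support
        (fun g _ => (hFol g).sub (tendsto_const_nhds (x := (1:ℝ))))
      simpa using this
    simpa using (tendsto_const_nhds (x := (1:ℝ))).add h0
  refine tendsto_of_tendsto_of_tendsto_of_le_of_le' tendsto_const_nhds hup ?_ ?_
  · filter_upwards [hpos] with n hn
    rw [hrankW n, one_le_div hn]
    have : finrank K (W n) ≤ finrank K ↥(rightMulSubmodule K (W n) r ⊔ W n) :=
      haveI := hfd n
      Submodule.finrank_mono le_sup_right
    rw [hrankW n] at this
    exact_mod_cast this
  · filter_upwards [hpos] with n hn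
    rw [hrankW n]
    calc (finrank K ↥(rightMulSubmodule K (W n) r ⊔ W n) : ℝ) / (F n).card
        ≤ ((F n ∪ F n * r.coeff.support).card : ℝ) / (F n).card := by
          gcongr
          exact_mod_cast hdim n
      _ ≤ ((F n).card + ∑ g ∈ r.coeff.support,
            (((F n ∪ (F n).image (· * g)).card : ℝ) - (F n).card)) / (F n).card := by
          gcongr
          exact hcard n
      _ = 1 + ∑ g ∈ r.coeff.support,
            ((((F n ∪ (F n).image (· * g)).card : ℝ)) / (F n).card - 1) := by
          rw [add_div, div_self (ne_of_gt hn), Finset.sum_div]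
          congr 1
          refine Finset.sum_congr rfl fun g _ => ?_
          rw [sub_div, div_self (ne_of_gt hn)]
end

section
/- Let K be a field and let R be an amenable affine K-algebra without zero divisors. Then R has Goldie dimension 1: R does not contain two independent nonzero left ideals, i.e. for any nonzero left ideals I, J of R one has I ∩ J ≠ 0. -/
/-!
Suppose `I ∩ J = 0` and pick `0 ≠ a ∈ I`, `0 ≠ b ∈ J`. For a Følner space `V = Wₙ` of dimension
`d`, right multiplication by `a` and by `b` is injective, so `V·a ⊆ I` and `V·b ⊆ J` are
independent subspaces of dimension `d` each. Modular dimension counting then forces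
`dim (V·a + V) + dim (V·b + V) ≥ 3d`, whereas the Følner condition makes both summands
smaller than `3d/2` for large `n`.
-/

open Filter Module

namespace Submodule

variable {K M : Type*} [Field K] [AddCommGroup M] [Module K M]

theorem finrank_add_finrank_add_finrank_le_of_disjoint {A B V : Submodule K M}
    [FiniteDimensional K A] [FiniteDimensional K B] [FiniteDimensional K V]
    (hAB : Disjoint A B) :
    finrank K A + finrank K B + finrank K V ≤ finrank K ↥(A ⊔ V) + finrank K ↥(B ⊔ V) := by
  have hsum : finrank K ↥(A ⊔ B) = finrank K A + finrank K B := by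
    have := finrank_sup_add_finrank_inf_eq A B
    rwa [hAB.eq_bot, finrank_bot, add_zero] at this
  have hsup : finrank K ↥(A ⊔ B) ≤ finrank K ↥((A ⊔ V) ⊔ (B ⊔ V)) :=
    finrank_mono (sup_le_sup le_sup_left le_sup_left)
  have hinf : finrank K V ≤ finrank K ↥((A ⊔ V) ⊓ (B ⊔ V)) :=
    finrank_mono (le_inf le_sup_right le_sup_right)
  have := finrank_sup_add_finrank_inf_eq (A ⊔ V) (B ⊔ V)
  omega

end Submodule

section RightMul

variable {K R : Type*} [Field K] [Ring R] [Algebra K R]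

instance (W : Submodule K R) [FiniteDimensional K W] (r : R) :
    FiniteDimensional K (rightMulSubmodule K W r) :=
  Module.Finite.map _ _

theorem finrank_rightMulSubmodule [NoZeroDivisors R] (W : Submodule K R) {r : R} (hr : r ≠ 0) :
    finrank K (rightMulSubmodule K W r) = finrank K W :=
  (W.equivMapOfInjective (LinearMap.mulRight K r) (mul_left_injective₀ hr)).finrank_eq.symm

theorem rightMulSubmodule_le_restrictScalars (W : Submodule K R) {I : Ideal R} {r : R}
    (hr : r ∈ I) : rightMulSubmodule K W r ≤ I.restrictScalars K := by
  rintro _ ⟨w, -, rfl⟩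
  exact I.mul_mem_left w hr

theorem disjoint_rightMulSubmodule (W : Submodule K R) {I J : Ideal R} (hIJ : I ⊓ J = ⊥)
    {a b : R} (ha : a ∈ I) (hb : b ∈ J) :
    Disjoint (rightMulSubmodule K W a) (rightMulSubmodule K W b) := by
  have : Disjoint (I.restrictScalars K) (J.restrictScalars K) := by
    rw [disjoint_iff, ← Submodule.restrictScalars_inf, hIJ, Submodule.restrictScalars_eq_bot_iff]
  exact this.mono (rightMulSubmodule_le_restrictScalars W ha)
    (rightMulSubmodule_le_restrictScalars W hb)

theorem FolnerExhaustion.eventually_two_mul_finrank_lt {W : ℕ → Submodule K R}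
    (hW : FolnerExhaustion K R W) (r : R) :
    ∀ᶠ n in atTop,
      2 * finrank K ↥(rightMulSubmodule K (W n) r ⊔ W n) < 3 * finrank K (W n) := by
  have hnhds : Set.Ioo (1 / 2 : ℝ) (3 / 2) ∈ nhds (1 : ℝ) :=
    Ioo_mem_nhds (by norm_num) (by norm_num)
  filter_upwards [hW.2.2.2 r hnhds] with n ⟨hlow, hhigh⟩
  dsimp only at hlow hhigh
  -- a vanishing denominator would make the ratio `0`, not `> 1/2`
  have hd : 0 < finrank K (W n) := by
    refine Nat.pos_of_ne_zero fun h => ?_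
    rw [h, Nat.cast_zero, div_zero] at hlow
    norm_num at hlow
  rw [div_lt_iff₀ (by exact_mod_cast hd)] at hhigh
  exact_mod_cast (by linarith : (2 * finrank K ↥(rightMulSubmodule K (W n) r ⊔ W n) : ℝ) <
    3 * finrank K (W n))

end RightMul

theorem amenable_goldie_dimension_one_general (K : Type*) [Field K] (R : Type*) [Ring R]
    [Algebra K R] [NoZeroDivisors R]
    (hR : AmenableAlgebra K R) :
    ∀ I J : Ideal R, I ≠ ⊥ → J ≠ ⊥ → I ⊓ J ≠ ⊥ := by
  intro I J hI hJ hIJ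
  obtain ⟨a, haI, ha⟩ := Submodule.exists_mem_ne_zero_of_ne_bot hI
  obtain ⟨b, hbJ, hb⟩ := Submodule.exists_mem_ne_zero_of_ne_bot hJ
  obtain ⟨W, hW⟩ := hR
  obtain ⟨n, hWa, hWb⟩ :=
    ((hW.eventually_two_mul_finrank_lt a).and (hW.eventually_two_mul_finrank_lt b)).exists
  have := hW.2.1 n
  have hcount := Submodule.finrank_add_finrank_add_finrank_le_of_disjoint (V := W n)
    (disjoint_rightMulSubmodule (W n) hIJ haI hbJ)
  rw [finrank_rightMulSubmodule _ ha, finrank_rightMulSubmodule _ hb] at hcount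
  omega

/-- An amenable affine algebra without zero divisors has Goldie dimension 1: any two nonzero
left ideals intersect nontrivially. -/
theorem amenable_goldie_dimension_one (K : Type*) [Field K] (R : Type*) [Ring R]
    [Algebra K R] [Algebra.FiniteType K R] [NoZeroDivisors R]
    (hR : AmenableAlgebra K R) :
    ∀ I J : Ideal R, I ≠ ⊥ → J ≠ ⊥ → I ⊓ J ≠ ⊥ :=
  amenable_goldie_dimension_one_general K R hR
end

section
/- Let K be a field and let F_2 be the free group on two generators. Then the group algebra K[F_2] is not an amenable K-algebra. -/
open Filter Module

noncomputable section Fox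

variable {R : Type*} [Ring R]

/-- The upper unitriangular `2×2` unit with a unit in the corner. -/
def triUnit (u : Rˣ) (e : R) : (Matrix (Fin 2) (Fin 2) R)ˣ where
  val := !![(u : R), e; 0, 1]
  inv := !![((u⁻¹ : Rˣ) : R), -(((u⁻¹ : Rˣ) : R) * e); 0, 1]
  val_inv := by
    ext i j
    fin_cases i <;> fin_cases j <;>
      simp [Matrix.mul_apply, Fin.sum_univ_two, mul_neg, ← mul_assoc]
  inv_val := by
    ext i j
    fin_cases i <;> fin_cases j <;>
      simp [Matrix.mul_apply, Fin.sum_univ_two, mul_neg, ← mul_assoc]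

lemma triUnit_inv_val (u : Rˣ) (e : R) :
    ((triUnit u e)⁻¹).val = !![((u⁻¹ : Rˣ) : R), -(((u⁻¹ : Rˣ) : R) * e); 0, 1] := rfl

variable (K : Type*) [Field K]

abbrev RA := MonoidAlgebra K (FreeGroup (Fin 2))

/-- Group elements as units of the group algebra. -/
def unitOf : FreeGroup (Fin 2) →* (RA K)ˣ :=
  (Units.map (MonoidAlgebra.of K (FreeGroup (Fin 2)))).comp
    (toUnits (G := FreeGroup (Fin 2))).toMonoidHom

lemma unitOf_inv_val (g : FreeGroup (Fin 2)) :
    ((unitOf K g)⁻¹).val = MonoidAlgebra.of K (FreeGroup (Fin 2)) g⁻¹ := by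
  rw [← map_inv]
  simp [unitOf]

/-- The Fox-derivative monoid homomorphism into unitriangular matrices. -/
def foxHom (i : Fin 2) : FreeGroup (Fin 2) →* (Matrix (Fin 2) (Fin 2) (RA K))ˣ :=
  FreeGroup.lift fun j => triUnit (unitOf K (FreeGroup.of j)) (if j = i then 1 else 0)

/-- The Fox derivative on group elements. -/
def foxFun (i : Fin 2) (g : FreeGroup (Fin 2)) : RA K :=
  (foxHom K i g).val 0 1

lemma foxEntries (i : Fin 2) (g : FreeGroup (Fin 2)) :
    (foxHom K i g).val 0 0
        = MonoidAlgebra.of K (FreeGroup (Fin 2)) g ∧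
      (foxHom K i g).val 1 0 = 0 ∧ (foxHom K i g).val 1 1 = 1 := by
  induction g using FreeGroup.induction_on with
  | C1 => simp [map_one]
  | of x =>
      show _ ∧ _ ∧ _
      simp [foxHom, FreeGroup.lift_apply_of, triUnit, unitOf]
  | inv_of x _ =>
      rw [map_inv]
      have hfox : foxHom K i (FreeGroup.of x)
          = triUnit (unitOf K (FreeGroup.of x)) (if x = i then 1 else 0) :=
        FreeGroup.lift_apply_of
      rw [hfox, triUnit_inv_val]
      refine ⟨?_, ?_, ?_⟩ <;> simp [unitOf_inv_val]
  | mul x y hx hy =>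
      rw [map_mul, Units.val_mul]
      obtain ⟨hx0, hx1, hx2⟩ := hx
      obtain ⟨hy0, hy1, hy2⟩ := hy
      refine ⟨?_, ?_, ?_⟩ <;>
        simp [Matrix.mul_apply, Fin.sum_univ_two, hx0, hx1, hx2, hy0, hy1, hy2, ← map_mul]

lemma foxFun_mul (i : Fin 2) (g h : FreeGroup (Fin 2)) :
    foxFun K i (g * h)
      = MonoidAlgebra.of K (FreeGroup (Fin 2)) g * foxFun K i h + foxFun K i g := by
  unfold foxFun
  rw [map_mul, Units.val_mul]
  rw [Matrix.mul_apply, Fin.sum_univ_two]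
  rw [(foxEntries K i g).1, (foxEntries K i h).2.2, mul_one]

lemma foxFun_of (i j : Fin 2) :
    foxFun K i (FreeGroup.of j) = if j = i then 1 else 0 := by
  unfold foxFun foxHom
  rw [FreeGroup.lift_apply_of]
  simp [triUnit]

/-- The linear extension of the Fox derivative to the group algebra. -/
def foxLin (i : Fin 2) : RA K →ₗ[K] RA K :=
  (Finsupp.lsum K fun g => LinearMap.toSpanSingleton K (RA K) (foxFun K i g)) ∘ₗ
    (MonoidAlgebra.coeffLinearEquiv K).toLinearMap

lemma foxLin_single (i : Fin 2) (g : FreeGroup (Fin 2)) (c : K) :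
    foxLin K i (MonoidAlgebra.single g c) = c • foxFun K i g := by
  rw [foxLin, LinearMap.comp_apply, LinearEquiv.coe_coe, MonoidAlgebra.coeffLinearEquiv_apply,
    MonoidAlgebra.coeff_single]
  erw [Finsupp.lsum_single]
  rw [LinearMap.toSpanSingleton_apply]

lemma foxLin_mul_of (i j : Fin 2) (p : RA K) :
    foxLin K i (p * MonoidAlgebra.of K (FreeGroup (Fin 2)) (FreeGroup.of j))
      = (if j = i then p else 0) + foxLin K i p := by
  induction p using MonoidAlgebra.induction_on with
  | of g =>
      rw [← map_mul]
      have h1 : MonoidAlgebra.of K (FreeGroup (Fin 2)) (g * FreeGroup.of j)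
          = MonoidAlgebra.single (g * FreeGroup.of j) (1:K) := rfl
      have h2 : MonoidAlgebra.of K (FreeGroup (Fin 2)) g
          = MonoidAlgebra.single g (1:K) := rfl
      rw [h1, h2, foxLin_single, foxLin_single, foxFun_mul, foxFun_of]
      split_ifs <;> simp [MonoidAlgebra.of_apply]
  | add f g hf hg =>
      rw [add_mul, map_add, hf, hg, map_add]
      split_ifs <;> abel
  | smul r f hf =>
      rw [smul_mul_assoc, map_smul, hf, map_smul, smul_add]
      split_ifs <;> simp

lemma foxLin_mul_sub (i j : Fin 2) (p : RA K) :
    foxLin K i (p * (MonoidAlgebra.of K (FreeGroup (Fin 2)) (FreeGroup.of j) - 1))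
      = if j = i then p else 0 := by
  rw [mul_sub, mul_one, map_sub, foxLin_mul_of, add_sub_cancel_right]

lemma free_pair (p q : RA K)
    (h : p * (MonoidAlgebra.of K (FreeGroup (Fin 2)) (FreeGroup.of 0) - 1)
        = q * (MonoidAlgebra.of K (FreeGroup (Fin 2)) (FreeGroup.of 1) - 1)) :
    p = 0 ∧ q = 0 := by
  have h0 := congrArg (foxLin K 0) h
  have h1 := congrArg (foxLin K 1) h
  rw [foxLin_mul_sub, foxLin_mul_sub] at h0
  rw [foxLin_mul_sub, foxLin_mul_sub] at h1
  norm_num at h0 h1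
  exact ⟨h0, h1.symm⟩

end Fox

section MainProof

open MonoidAlgebra

variable {K : Type*} [Field K]

lemma rightMul_inj0 :
    Function.Injective
      (LinearMap.mulRight K (MonoidAlgebra.of K (FreeGroup (Fin 2)) (FreeGroup.of 0) - 1)) := by
  rw [← LinearMap.ker_eq_bot]
  refine (Submodule.eq_bot_iff _).2 fun p hp => ?_
  rw [LinearMap.mem_ker, LinearMap.mulRight_apply] at hp
  exact (free_pair K p 0 (by rw [hp, zero_mul])).1

lemma rightMul_inj1 :
    Function.Injective
      (LinearMap.mulRight K (MonoidAlgebra.of K (FreeGroup (Fin 2)) (FreeGroup.of 1) - 1)) := by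
  rw [← LinearMap.ker_eq_bot]
  refine (Submodule.eq_bot_iff _).2 fun p hp => ?_
  rw [LinearMap.mem_ker, LinearMap.mulRight_apply] at hp
  exact (free_pair K 0 p (by rw [zero_mul, hp])).2

set_option maxHeartbeats 1000000 in
set_option synthInstance.maxHeartbeats 400000 in
lemma three_le_finrank (W : Submodule K (RA K)) [FiniteDimensional K W] :
    3 * finrank K W ≤
      finrank K ↥(rightMulSubmodule K W
          (MonoidAlgebra.of K (FreeGroup (Fin 2)) (FreeGroup.of 0) - 1) ⊔ W) +
        finrank K ↥(rightMulSubmodule K W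
          (MonoidAlgebra.of K (FreeGroup (Fin 2)) (FreeGroup.of 1) - 1) ⊔ W) := by
  set x := MonoidAlgebra.of K (FreeGroup (Fin 2)) (FreeGroup.of 0) - 1 with hx
  set y := MonoidAlgebra.of K (FreeGroup (Fin 2)) (FreeGroup.of 1) - 1 with hy
  set X := rightMulSubmodule K W x with hX
  set Y := rightMulSubmodule K W y with hY
  haveI hfinX : FiniteDimensional K X := Module.Finite.map W (LinearMap.mulRight K x)
  haveI hfinY : FiniteDimensional K Y := Module.Finite.map W (LinearMap.mulRight K y)
  haveI : FiniteDimensional K ↥(X ⊔ W) := Submodule.finiteDimensional_sup X W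
  haveI : FiniteDimensional K ↥(Y ⊔ W) := Submodule.finiteDimensional_sup Y W
  haveI : FiniteDimensional K ↥(X ⊔ Y) := Submodule.finiteDimensional_sup X Y
  haveI : FiniteDimensional K ↥((X ⊔ W) ⊔ (Y ⊔ W)) := Submodule.finiteDimensional_sup _ _
  have hfX : finrank K X = finrank K W :=
    ((Submodule.equivMapOfInjective _ rightMul_inj0 W).finrank_eq).symm
  have hfY : finrank K Y = finrank K W :=
    ((Submodule.equivMapOfInjective _ rightMul_inj1 W).finrank_eq).symm
  have hXY : X ⊓ Y = ⊥ := by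
    refine (Submodule.eq_bot_iff _).2 fun r hr => ?_
    obtain ⟨hr1, hr2⟩ := Submodule.mem_inf.1 hr
    obtain ⟨p, hp, hpx⟩ := Submodule.mem_map.1 hr1
    obtain ⟨q, hq, hqy⟩ := Submodule.mem_map.1 hr2
    rw [LinearMap.mulRight_apply] at hpx hqy
    have hp0 : p = 0 := (free_pair K p q (by rw [hpx, hqy])).1
    rw [← hpx, hp0, zero_mul]
  have h1 : finrank K ↥(X ⊔ Y) = finrank K X + finrank K Y := by
    have h := Submodule.finrank_sup_add_finrank_inf_eq X Y
    rw [hXY, finrank_bot, add_zero] at h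
    exact h
  have h2 : finrank K ↥(X ⊔ W) + finrank K ↥(Y ⊔ W)
      = finrank K ↥((X ⊔ W) ⊔ (Y ⊔ W)) + finrank K ↥((X ⊔ W) ⊓ (Y ⊔ W)) :=
    (Submodule.finrank_sup_add_finrank_inf_eq _ _).symm
  have h3 : finrank K ↥(X ⊔ Y) ≤ finrank K ↥((X ⊔ W) ⊔ (Y ⊔ W)) :=
    Submodule.finrank_mono (sup_le_sup le_sup_left le_sup_left)
  have h4 : finrank K W ≤ finrank K ↥((X ⊔ W) ⊓ (Y ⊔ W)) :=
    Submodule.finrank_mono (le_inf le_sup_right le_sup_right)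
  omega

end MainProof

/-- The group algebra of the free group on two generators is not amenable. -/
theorem freeGroup_groupAlgebra_not_amenable (K : Type*) [Field K] :
    ¬ AmenableAlgebra K (MonoidAlgebra K (FreeGroup (Fin 2))) := by
  rintro ⟨W, hmono, hfd, hexh, hlim⟩
  obtain ⟨N, hN⟩ := hexh 1
  have hpos : ∀ n, N ≤ n → 0 < finrank K (W n) := by
    intro n hn
    haveI := hfd n
    have h1 : (1 : MonoidAlgebra K (FreeGroup (Fin 2))) ∈ W n := hmono hn hN
    haveI : Nontrivial (W n) := ⟨⟨⟨1, h1⟩, 0, by simp⟩⟩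
    exact finrank_pos
  set x := MonoidAlgebra.of K (FreeGroup (Fin 2)) (FreeGroup.of 0) - 1 with hx
  set y := MonoidAlgebra.of K (FreeGroup (Fin 2)) (FreeGroup.of 1) - 1 with hy
  have hsum := (hlim x).add (hlim y)
  have hev : ∀ᶠ n in atTop,
      (3:ℝ) ≤ (finrank K ↥(rightMulSubmodule K (W n) x ⊔ W n) : ℝ) / finrank K (W n)
        + (finrank K ↥(rightMulSubmodule K (W n) y ⊔ W n) : ℝ) / finrank K (W n) := by
    filter_upwards [eventually_ge_atTop N] with n hn
    haveI := hfd n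
    have hd : (0:ℝ) < (finrank K (W n) : ℝ) := by exact_mod_cast hpos n hn
    rw [← add_div, le_div_iff₀ hd]
    exact_mod_cast three_le_finrank (W n)
  have hle : (3:ℝ) ≤ 1 + 1 := ge_of_tendsto hsum hev
  linarith
end
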